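/- arXiv:1609.07219 — 4 statements merged into one kernel-verified Lean document; each statement's English description precedes it below -/
import Mathlib

section
/- Assume P_{ij} > 0 and Q_{ii} > 0 for all i,j. Let (e, f, u) be a fluid model solution and fix (ē, f̄) ∈ ℰ with its associated (unique) vector ā ∈ [0,1]^r, and set m̄ = Σ_{i : ā_i = 1} ē_{ii}. Define V : 𝒯 → ℝ_{≥0} by V(x, y) = Σ_{i,j} |y_{ij} − f̄_{ij}| + Σ_{i ≠ j} |x_{ij} − ē_{ij}| + Σ_{i : ā_i < 1} x_{ii} + |m̄ − Σ_{i : ā_i = 1} x_{ii}|. Call t > 0 a regular point if each of the functions s ↦ e_{ii}(s) (for every i), s ↦ |f_{ij}(s) − f̄_{ij}| (for every i,j), s ↦ |e_{ij}(s) − ē_{ij}| (for every i ≠ j), and s ↦ |m̄ − Σ_{i : ā_i = 1} e_{ii}(s)| is differentiable at t. Then at every regular point t, the function s ↦ V(e(s), f(s)) is differentiable at t with derivative ≤ 0; moreover if (e(t), f(t)) ∉ ℰ then this derivative is strictly negative. -/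
/-!
Write `φ = f - f̄`, `ε = e - ē` for the deviations from the equilibrium and
`Δᵢ = λᵢ (āᵢ + uᵢ' - 1)`. The balance equations of `ℰ` turn the derivative of `V` into a sum over
stations `i` of three terms
`Δᵢ (cᵢ - Sᵢ) + (cᵢ Rᵢ - R̂ᵢ) + ((cᵢ Qᵢᵢ + Kᵢ) Wᵢ - Ŵᵢ)`, where `Wᵢ`, `Rᵢ` are the `μ`-weighted sums
of the column `i` of `φ` and `ε`, `Ŵᵢ`, `R̂ᵢ` those of their absolute values, `Sᵢ`, `Kᵢ` are the
`P`- and `Q`-weighted sums of the signs along row `i`, and `cᵢ ∈ [-1, 1]` is the slope of `V` in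
`eᵢᵢ`, replaced by `Sᵢ` where `eᵢᵢ = 0` (there `eᵢᵢ' = 0`). Each term is nonpositive.

If the derivative vanishes, each column `i` of deviations has the sign of `cᵢ`. A row of `φ` of
constant sign would force that sign on every column, contradicting conservation of mass; hence
stations with `eᵢᵢ = 0` receive no deviation, the others have `āᵢ = 1`, all deviations share the
sign of `m̄ - Σ eᵢᵢ`, and conservation of mass makes them vanish: `(e(t), f(t)) ∈ ℰ`.
-/

open Finset Filter Topology MeasureTheory intervalIntegral

abbrev Mat (r : ℕ) := Fin r → Fin r → ℝ

structure NetParams (r : ℕ) where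
  lam : Fin r → ℝ
  mu : Mat r
  P : Mat r
  lam_pos : ∀ i, 0 < lam i
  mu_pos : ∀ i j, 0 < mu i j
  P_nonneg : ∀ i j, 0 ≤ P i j
  P_rowsum : ∀ i, ∑ j, P i j = 1

def IsRouting {r : ℕ} (q : Mat r) : Prop :=
  (∀ i j, 0 ≤ q i j) ∧ ∀ i, ∑ j, q i j = 1

def MemT {r : ℕ} (e f : Mat r) : Prop :=
  (∀ i j, e i j ∈ Set.Icc (0:ℝ) 1) ∧ (∀ i j, f i j ∈ Set.Icc (0:ℝ) 1) ∧
    (∑ i, ∑ j, (e i j + f i j)) = 1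

open scoped Classical in
/-- The Lebesgue–Stieltjes measure associated with a non-decreasing `g : ℝ → ℝ`
(junk value `0` if `g` is not monotone). -/
noncomputable def lsMeasure (g : ℝ → ℝ) : Measure ℝ :=
  if h : Monotone g then h.stieltjesFunction.measure else 0

/-- A fluid model solution `(e, f, u)` for the ridesharing network with static
routing matrix `Q`.  All functions are defined on `ℝ`, but only their values
on `[0, ∞)` are relevant; `u` is extended by `0` on `(-∞, 0]`. -/
structure IsFluidSol {r : ℕ} (np : NetParams r) (Q : Mat r) (e f : ℝ → Mat r)
    (u : ℝ → Fin r → ℝ) : Prop where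
  cont_e : ∀ i j, ContinuousOn (fun t => e t i j) (Set.Ici 0)
  cont_f : ∀ i j, ContinuousOn (fun t => f t i j) (Set.Ici 0)
  mem_T : ∀ t, 0 ≤ t → MemT (e t) (f t)
  u_nonneg : ∀ t i, 0 ≤ u t i
  u_mono : ∀ i, Monotone fun t => u t i
  u_zero : ∀ i, ∀ t ≤ (0:ℝ), u t i = 0
  eq_f : ∀ i j, ∀ t, 0 ≤ t →
    f t i j = f 0 i j + np.lam i * np.P i j * (t - u t i)
      - np.mu i j * ∫ s in (0:ℝ)..t, f s i j
  eq_e_off : ∀ i j, i ≠ j → ∀ t, 0 ≤ t →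
    e t i j = e 0 i j - np.mu i j * (∫ s in (0:ℝ)..t, e s i j)
      + Q i j * ∑ k, np.mu k i * ∫ s in (0:ℝ)..t, f s k i
  eq_e_diag : ∀ i, ∀ t, 0 ≤ t →
    e t i i = e 0 i i - np.lam i * (t - u t i)
      + (∑ j ∈ Finset.univ.filter (fun j => j ≠ i), np.mu j i * ∫ s in (0:ℝ)..t, e s j i)
      + Q i i * ∑ j, np.mu j i * ∫ s in (0:ℝ)..t, f s j i
  compl : ∀ i, ∫⁻ s in Set.Ici (0:ℝ),
      ENNReal.ofReal (e s i i) ∂(lsMeasure fun t => u t i) = 0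

open scoped Classical in
/-- The equilibrium set ℰ associated to the routing matrix `Q`. -/
noncomputable def eqSet {r : ℕ} (np : NetParams r) (Q : Mat r) : Set (Mat r × Mat r) :=
  {p | MemT p.1 p.2 ∧ ∃ a : Fin r → ℝ, (∀ i, 0 ≤ a i ∧ a i ≤ 1) ∧
    (∀ i j, np.lam i * np.P i j * a i = np.mu i j * p.2 i j) ∧
    (∀ i j, i ≠ j → np.mu i j * p.1 i j = Q i j * ∑ k, np.mu k i * p.2 k i) ∧
    (∀ i, np.lam i * a i =
      (∑ k ∈ Finset.univ.filter (fun k => k ≠ i), np.mu k i * p.1 k i)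
        + Q i i * ∑ k, np.mu k i * p.2 k i) ∧
    (∀ i, (1 - a i) * p.1 i i = 0)}

/-- The Lyapunov function `V` built from the equilibrium point `(ē, f̄)`, its
associated availability vector `ā` and the mass `m̄ = Σ_{i : ā_i = 1} ē_{ii}`. -/
noncomputable def lyapV {r : ℕ} (ebar fbar : Mat r) (abar : Fin r → ℝ)
    (x y : Mat r) : ℝ :=
  (∑ i, ∑ j, |y i j - fbar i j|)
    + (∑ i, ∑ j ∈ Finset.univ.filter (fun j => j ≠ i), |x i j - ebar i j|)
    + (∑ i ∈ Finset.univ.filter (fun i => abar i < 1), x i i)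
    + |(∑ i ∈ Finset.univ.filter (fun i => abar i = 1), ebar i i)
        - ∑ i ∈ Finset.univ.filter (fun i => abar i = 1), x i i|

namespace Real

lemma sign_mul_self_eq_abs (x : ℝ) : sign x * x = |x| := by
  rcases lt_trichotomy x 0 with h | rfl | h
  · rw [sign_of_neg h, abs_of_neg h]; ring
  · simp
  · rw [sign_of_pos h, abs_of_pos h, one_mul]

lemma abs_sign_le_one (x : ℝ) : |sign x| ≤ 1 := by
  rcases sign_apply_eq x with h | h | h <;> simp [h]

lemma sign_eq_one_iff {x : ℝ} : sign x = 1 ↔ 0 < x := by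
  refine ⟨fun h => ?_, sign_of_pos⟩
  rcases lt_trichotomy x 0 with hx | rfl | hx
  · rw [sign_of_neg hx] at h; norm_num at h
  · simp at h
  · exact hx

end Real

lemma mul_le_abs_of_abs_le_one {c v : ℝ} (hc : |c| ≤ 1) : c * v ≤ |v| :=
  (le_abs_self _).trans <| by rw [abs_mul]; exact mul_le_of_le_one_left (abs_nonneg v) hc

section WeightedSums

variable {ι : Type*} {s : Finset ι} {m v : ι → ℝ} {c : ℝ}

lemma mul_sum_le_sum_mul_abs (hc : |c| ≤ 1) (hm : ∀ k ∈ s, 0 ≤ m k) :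
    c * ∑ k ∈ s, m k * v k ≤ ∑ k ∈ s, m k * |v k| := by
  rw [mul_sum]
  refine sum_le_sum fun k hk => ?_
  rw [mul_left_comm]
  exact mul_le_mul_of_nonneg_left (mul_le_abs_of_abs_le_one hc) (hm k hk)

lemma mul_eq_abs_of_mul_sum_eq (hc : |c| ≤ 1) (hm : ∀ k ∈ s, 0 < m k)
    (h : c * ∑ k ∈ s, m k * v k = ∑ k ∈ s, m k * |v k|) : ∀ k ∈ s, c * v k = |v k| := by
  have hterm : ∀ k ∈ s, 0 ≤ m k * (|v k| - c * v k) := fun k hk =>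
    mul_nonneg (hm k hk).le (sub_nonneg.2 (mul_le_abs_of_abs_le_one hc))
  have hsum : ∑ k ∈ s, m k * (|v k| - c * v k) = 0 := by
    simp only [mul_sub, sum_sub_distrib, mul_left_comm _ c, ← mul_sum, h, sub_self]
  intro k hk
  have hk0 := (sum_eq_zero_iff_of_nonneg hterm).1 hsum k hk
  rcases mul_eq_zero.1 hk0 with h0 | h0
  · exact absurd h0 (hm k hk).ne'
  · linarith

lemma eq_of_sum_mul_eq_of_abs_eq_one [Fintype ι] (hm : ∀ k, 0 < m k) (hm1 : ∑ k, m k = 1)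
    (hv : ∀ k, |v k| ≤ 1) (hc : |c| = 1) (h : ∑ k, m k * v k = c) : ∀ k, v k = c := by
  have hcc : c * c = 1 := by rw [← abs_mul_abs_self, hc, one_mul]
  have hterm : ∀ k ∈ univ, 0 ≤ m k * (1 - c * v k) := fun k _ =>
    mul_nonneg (hm k).le (sub_nonneg.2 ((mul_le_abs_of_abs_le_one hc.le).trans (hv k)))
  have hsum : ∑ k, m k * (1 - c * v k) = 0 := by
    simp only [mul_sub, mul_one, sum_sub_distrib, hm1, mul_left_comm _ c, ← mul_sum, h, hcc,
      sub_self]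
  intro k
  rcases mul_eq_zero.1 ((sum_eq_zero_iff_of_nonneg hterm).1 hsum k (mem_univ k)) with h0 | h0
  · exact absurd h0 (hm k).ne'
  · linear_combination (-c) * h0 - v k * hcc

lemma eq_zero_of_sum_sum_abs_nonpos [Fintype ι] {κ : Type*} {F : ι → κ → ℝ}
    {t : ι → Finset κ} (h : ∑ k, ∑ i ∈ t k, |F k i| ≤ 0) : ∀ k, ∀ i ∈ t k, F k i = 0 := by
  intro k i hi
  have hk := (sum_eq_zero_iff_of_nonneg fun k _ => sum_nonneg fun i _ => abs_nonneg (F k i)).1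
    (le_antisymm h (sum_nonneg fun k _ => sum_nonneg fun i _ => abs_nonneg _)) k (mem_univ k)
  exact abs_eq_zero.1 ((sum_eq_zero_iff_of_nonneg fun i _ => abs_nonneg _).1 hk i hi)

end WeightedSums

lemma mul_add_eq_self_of_abs_eq_one {c q K : ℝ} (hq : 0 < q) (hK : |K| ≤ 1 - q) (hc : |c| ≤ 1)
    (h : |c * q + K| = 1) : c * q + K = c := by
  rw [abs_le] at hK hc
  rcases (abs_eq zero_le_one).1 h with h1 | h1 <;> nlinarith

lemma eq_sign_of_mul_eq_abs {c v : ℝ} (hv : v ≠ 0) (h : c * v = |v|) : c = Real.sign v :=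
  mul_right_cancel₀ hv (h.trans (Real.sign_mul_self_eq_abs v).symm)

lemma abs_eq_one_of_mul_eq_abs {c v : ℝ} (hv : v ≠ 0) (h : c * v = |v|) : |c| = 1 := by
  have := congrArg abs h
  rw [abs_mul, abs_abs] at this
  exact mul_right_cancel₀ (abs_ne_zero.2 hv) (this.trans (one_mul _).symm)

lemma hasDerivAt_integral_of_continuousOn_Ici {g : ℝ → ℝ} (hg : ContinuousOn g (Set.Ici 0))
    {t : ℝ} (ht : 0 < t) : HasDerivAt (fun s => ∫ x in (0:ℝ)..s, g x) (g t) t := by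
  have hIci : Set.Ici (0:ℝ) ∈ 𝓝 t := Ici_mem_nhds ht
  refine integral_hasDerivAt_right ?_
    ⟨Set.Ici 0, hIci, hg.aestronglyMeasurable measurableSet_Ici⟩
    ((hg t ht.le).continuousAt hIci)
  exact (hg.mono fun x hx => by rw [Set.uIcc_of_le ht.le] at hx; exact hx.1).intervalIntegrable

/-- At a zero of `g`, `|g|` has a minimum, so its derivative vanishes. -/
lemma HasDerivAt.abs_of_differentiableAt {g : ℝ → ℝ} {g' t : ℝ} (hg : HasDerivAt g g' t)
    (ha : DifferentiableAt ℝ (fun s => |g s|) t) :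
    HasDerivAt (fun s => |g s|) (Real.sign (g t) * g') t := by
  rcases lt_trichotomy (g t) 0 with h | h | h
  · rw [Real.sign_of_neg h]; exact (hasDerivAt_abs_neg h).comp t hg
  · have hmin : IsLocalMin (fun s => |g s|) t := Eventually.of_forall fun s => by simp [h]
    rw [h, Real.sign_zero, zero_mul, ← hmin.hasDerivAt_eq_zero ha.hasDerivAt]
    exact ha.hasDerivAt
  · rw [Real.sign_of_pos h]; exact (hasDerivAt_abs_pos h).comp t hg

lemma measure_eq_zero_of_setLIntegral_eq_zero {α : Type*} [MeasurableSpace α] {μ : Measure α}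
    {E : α → ℝ} {s T : Set α} (hs : MeasurableSet s) (hsT : s ⊆ T) {c : ℝ} (hc : 0 < c)
    (hE : ∀ x ∈ s, c ≤ E x) (h : ∫⁻ x in T, ENNReal.ofReal (E x) ∂μ = 0) : μ s = 0 := by
  have hle : ENNReal.ofReal c * μ s ≤ 0 := calc
    ENNReal.ofReal c * μ s = ∫⁻ _ in s, ENNReal.ofReal c ∂μ := (setLIntegral_const s _).symm
    _ ≤ ∫⁻ x in s, ENNReal.ofReal (E x) ∂μ :=
      setLIntegral_mono' hs fun x hx => ENNReal.ofReal_le_ofReal (hE x hx)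
    _ ≤ ∫⁻ x in T, ENNReal.ofReal (E x) ∂μ := lintegral_mono_set hsT
    _ = 0 := h
  exact (mul_eq_zero.1 (nonpos_iff_eq_zero.1 hle)).resolve_left (by simpa using hc)

/-- On `(a, b)`, `u` lies between `rightLim u a` and the left limit at `b` of `rightLim u`, whose
difference is the Stieltjes measure of `(a, b)`. -/
lemma Monotone.hasDerivAt_zero_of_measure_Ioo_eq_zero {u : ℝ → ℝ} (hu : Monotone u) {a b t : ℝ}
    (ht : t ∈ Set.Ioo a b) (h : hu.stieltjesFunction.measure (Set.Ioo a b) = 0) :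
    HasDerivAt u 0 t := by
  rw [StieltjesFunction.measure_Ioo, ENNReal.ofReal_eq_zero, sub_nonpos] at h
  have hle : ∀ p ∈ Set.Ioo a b, ∀ q ∈ Set.Ioo a b, u q ≤ u p := fun p hp q hq => calc
    u q ≤ hu.stieltjesFunction q := hu.le_rightLim le_rfl
    _ ≤ Function.leftLim hu.stieltjesFunction b := hu.stieltjesFunction.mono.le_leftLim hq.2
    _ ≤ hu.stieltjesFunction a := h
    _ ≤ u p := hu.rightLim_le hp.1
  refine (hasDerivAt_const t (u t)).congr_of_eventuallyEq ?_
  filter_upwards [Ioo_mem_nhds ht.1 ht.2] with s hs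
  exact le_antisymm (hle t ht s hs) (hle s hs t ht)

lemma Monotone.hasDerivAt_zero_of_lintegral_eq_zero {u E : ℝ → ℝ} (hu : Monotone u) {t : ℝ}
    (ht : 0 < t) (hE : ContinuousAt E t) (hEt : 0 < E t)
    (h : ∫⁻ s in Set.Ici 0, ENNReal.ofReal (E s) ∂hu.stieltjesFunction.measure = 0) :
    HasDerivAt u 0 t := by
  have hnhds : ∀ᶠ s in 𝓝 t, E t / 2 < E s ∧ 0 < s :=
    (hE.eventually_const_lt (half_lt_self hEt)).and (eventually_gt_nhds ht)
  obtain ⟨a, b, hab, hsub⟩ := mem_nhds_iff_exists_Ioo_subset.1 hnhds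
  refine hu.hasDerivAt_zero_of_measure_Ioo_eq_zero hab ?_
  exact measure_eq_zero_of_setLIntegral_eq_zero measurableSet_Ioo
    (fun s hs => (hsub hs).2.le) (half_pos hEt) (fun s hs => (hsub hs).1.le) h

/-! ### Derivatives along a fluid model solution -/

noncomputable section Drift

variable {r : ℕ}

def colSum (m v : Mat r) (i : Fin r) : ℝ := ∑ k, m k i * v k i

def offColSum (m v : Mat r) (i : Fin r) : ℝ :=
  ∑ k ∈ Finset.univ.filter (fun k => k ≠ i), m k i * v k i

variable (np : NetParams r) (Q : Mat r)

/-! The right-hand sides of the fluid equations at a state `(x, y)`; the vector `w` stands for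
`u'(t)`, so that arrivals at station `i` find a car at rate `λ i * (1 - w i)`. -/

def fDrift (w : Fin r → ℝ) (y : Mat r) (i j : Fin r) : ℝ :=
  np.lam i * np.P i j * (1 - w i) - np.mu i j * y i j

def eDrift (x y : Mat r) (i j : Fin r) : ℝ :=
  -(np.mu i j * x i j) + Q i j * colSum np.mu y i

def eDiagDrift (w : Fin r → ℝ) (x y : Mat r) (i : Fin r) : ℝ :=
  -(np.lam i * (1 - w i)) + offColSum np.mu x i + Q i i * colSum np.mu y i

def satMass (abar : Fin r → ℝ) (x : Mat r) : ℝ :=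
  ∑ i ∈ Finset.univ.filter (fun i => abar i = 1), x i i

/-- The chain-rule derivative of `lyapV` along the fluid equations; an absolute value at a zero
contributes `0`. -/
def lyapDrift (ebar fbar : Mat r) (abar w : Fin r → ℝ) (x y : Mat r) : ℝ :=
  (∑ i, ∑ j, Real.sign (y i j - fbar i j) * fDrift np w y i j)
    + (∑ i, ∑ j ∈ Finset.univ.filter (fun j => j ≠ i),
        Real.sign (x i j - ebar i j) * eDrift np Q x y i j)
    + (∑ i ∈ Finset.univ.filter (fun i => abar i < 1), eDiagDrift np Q w x y i)
    + Real.sign (satMass abar ebar - satMass abar x)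
        * -∑ i ∈ Finset.univ.filter (fun i => abar i = 1), eDiagDrift np Q w x y i

structure IsEquilibrium (ebar fbar : Mat r) (abar : Fin r → ℝ) : Prop where
  mem : MemT ebar fbar
  abar_mem : ∀ i, 0 ≤ abar i ∧ abar i ≤ 1
  balance_f : ∀ i j, np.lam i * np.P i j * abar i = np.mu i j * fbar i j
  balance_e : ∀ i j, i ≠ j → np.mu i j * ebar i j = Q i j * ∑ k, np.mu k i * fbar k i
  balance_diag : ∀ i, np.lam i * abar i =
    (∑ k ∈ Finset.univ.filter (fun k => k ≠ i), np.mu k i * ebar k i)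
      + Q i i * ∑ k, np.mu k i * fbar k i
  compl : ∀ i, (1 - abar i) * ebar i i = 0

/-- What a fluid model solution satisfies at a regular point, with `w = u'(t)`. -/
structure IsRegularState (w : Fin r → ℝ) (x y : Mat r) : Prop where
  mem : MemT x y
  idle_nonneg : ∀ i, 0 ≤ w i
  idle_eq_zero : ∀ i, 0 < x i i → w i = 0
  diag_drift_eq_zero : ∀ i, x i i = 0 → eDiagDrift np Q w x y i = 0

variable {np Q}

lemma IsEquilibrium.mem_eqSet {x y : Mat r} {a : Fin r → ℝ} (h : IsEquilibrium np Q x y a) :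
    (x, y) ∈ eqSet np Q :=
  ⟨h.mem, a, h.abar_mem, h.balance_f, h.balance_e, h.balance_diag, h.compl⟩

end Drift

namespace IsFluidSol

variable {r : ℕ} {np : NetParams r} {Q : Mat r} {e f : ℝ → Mat r} {u : ℝ → Fin r → ℝ}
  {w : Fin r → ℝ} {t : ℝ}

lemma hasDerivAt_colSum_integral (hsol : IsFluidSol np Q e f u) (ht : 0 < t) (i : Fin r) :
    HasDerivAt (fun s => ∑ k, np.mu k i * ∫ x in (0:ℝ)..s, f x k i) (colSum np.mu (f t) i) t :=
  HasDerivAt.fun_sum fun k _ =>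
    (hasDerivAt_integral_of_continuousOn_Ici (hsol.cont_f k i) ht).const_mul _

lemma hasDerivAt_offColSum_integral (hsol : IsFluidSol np Q e f u) (ht : 0 < t) (i : Fin r) :
    HasDerivAt (fun s => ∑ k ∈ Finset.univ.filter (fun k => k ≠ i),
      np.mu k i * ∫ x in (0:ℝ)..s, e x k i) (offColSum np.mu (e t) i) t :=
  HasDerivAt.fun_sum fun k _ =>
    (hasDerivAt_integral_of_continuousOn_Ici (hsol.cont_e k i) ht).const_mul _

lemma differentiableAt_u (hsol : IsFluidSol np Q e f u) (ht : 0 < t) {i : Fin r}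
    (h : DifferentiableAt ℝ (fun s => e s i i) t) : DifferentiableAt ℝ (fun s => u s i) t := by
  have hserved : DifferentiableAt ℝ (fun s => np.lam i * (s - u s i)) t := by
    refine ((((differentiableAt_const (e 0 i i)).sub h).add
      (hsol.hasDerivAt_offColSum_integral ht i).differentiableAt).add
      ((hsol.hasDerivAt_colSum_integral ht i).differentiableAt.const_mul (Q i i)))
      |>.congr_of_eventuallyEq ?_
    filter_upwards [Ici_mem_nhds ht] with s hs
    simp only [Pi.add_apply, Pi.sub_apply]
    linarith [hsol.eq_e_diag i s hs]
  refine (differentiableAt_id.sub (hserved.const_mul (np.lam i)⁻¹)).congr_of_eventuallyEq ?_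
  filter_upwards with s
  simp only [Pi.sub_apply, id, inv_mul_cancel_left₀ (np.lam_pos i).ne', sub_sub_cancel]

lemma hasDerivAt_e_diag (hsol : IsFluidSol np Q e f u) (ht : 0 < t)
    (hw : ∀ i, HasDerivAt (fun s => u s i) (w i) t) (i : Fin r) :
    HasDerivAt (fun s => e s i i) (eDiagDrift np Q w (e t) (f t) i) t := by
  refine ((((hasDerivAt_const t (e 0 i i)).sub (((hasDerivAt_id t).sub (hw i)).const_mul
    (np.lam i))).add (hsol.hasDerivAt_offColSum_integral ht i)).add
    ((hsol.hasDerivAt_colSum_integral ht i).const_mul (Q i i))).congr_deriv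
    (by simp only [eDiagDrift]; ring) |>.congr_of_eventuallyEq ?_
  filter_upwards [Ici_mem_nhds ht] with s hs
  exact hsol.eq_e_diag i s hs

lemma hasDerivAt_e (hsol : IsFluidSol np Q e f u) (ht : 0 < t) {i j : Fin r} (hij : i ≠ j) :
    HasDerivAt (fun s => e s i j) (eDrift np Q (e t) (f t) i j) t := by
  refine (((hasDerivAt_const t (e 0 i j)).sub
    ((hasDerivAt_integral_of_continuousOn_Ici (hsol.cont_e i j) ht).const_mul (np.mu i j))).add
    ((hsol.hasDerivAt_colSum_integral ht i).const_mul (Q i j))).congr_deriv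
    (by simp only [eDrift]; ring) |>.congr_of_eventuallyEq ?_
  filter_upwards [Ici_mem_nhds ht] with s hs
  exact hsol.eq_e_off i j hij s hs

lemma hasDerivAt_f (hsol : IsFluidSol np Q e f u) (ht : 0 < t)
    (hw : ∀ i, HasDerivAt (fun s => u s i) (w i) t) (i j : Fin r) :
    HasDerivAt (fun s => f s i j) (fDrift np w (f t) i j) t := by
  refine (((hasDerivAt_const t (f 0 i j)).add (((hasDerivAt_id t).sub (hw i)).const_mul
    (np.lam i * np.P i j))).sub
    ((hasDerivAt_integral_of_continuousOn_Ici (hsol.cont_f i j) ht).const_mul (np.mu i j)))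
    |>.congr_deriv (by simp only [fDrift]; ring) |>.congr_of_eventuallyEq ?_
  filter_upwards [Ici_mem_nhds ht] with s hs
  exact hsol.eq_f i j s hs

lemma isRegularState (hsol : IsFluidSol np Q e f u) (ht : 0 < t)
    (hw : ∀ i, HasDerivAt (fun s => u s i) (w i) t) : IsRegularState np Q w (e t) (f t) where
  mem := hsol.mem_T t ht.le
  idle_nonneg i := (hw i).deriv ▸ (hsol.u_mono i).deriv_nonneg
  idle_eq_zero i hpos := by
    have hcompl := hsol.compl i
    rw [lsMeasure, dif_pos (hsol.u_mono i)] at hcompl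
    exact (hw i).unique <| (hsol.u_mono i).hasDerivAt_zero_of_lintegral_eq_zero ht
      ((hsol.cont_e i i t ht.le).continuousAt (Ici_mem_nhds ht)) hpos hcompl
  diag_drift_eq_zero i hzero := by
    have hmin : IsLocalMin (fun s => e s i i) t := by
      filter_upwards [Ici_mem_nhds ht] with s hs
      exact hzero ▸ ((hsol.mem_T s hs).1 i i).1
    exact hmin.hasDerivAt_eq_zero (hsol.hasDerivAt_e_diag ht hw i)

lemma hasDerivAt_lyapV (hsol : IsFluidSol np Q e f u) (ht : 0 < t)
    (hw : ∀ i, HasDerivAt (fun s => u s i) (w i) t) {ebar fbar : Mat r} {abar : Fin r → ℝ}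
    (hreg_f : ∀ i j, DifferentiableAt ℝ (fun s => |f s i j - fbar i j|) t)
    (hreg_e : ∀ i j, i ≠ j → DifferentiableAt ℝ (fun s => |e s i j - ebar i j|) t)
    (hreg_m : DifferentiableAt ℝ (fun s => |satMass abar ebar - satMass abar (e s)|) t) :
    HasDerivAt (fun s => lyapV ebar fbar abar (e s) (f s))
      (lyapDrift np Q ebar fbar abar w (e t) (f t)) t := by
  have hdiag := hsol.hasDerivAt_e_diag ht hw
  refine (((HasDerivAt.fun_sum fun i _ => HasDerivAt.fun_sum fun j _ =>
    ((hsol.hasDerivAt_f ht hw i j).sub_const (fbar i j)).abs_of_differentiableAt (hreg_f i j)).add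
    (HasDerivAt.fun_sum fun i _ => HasDerivAt.fun_sum fun j hj => ?_)).add
    (HasDerivAt.fun_sum fun i _ => hdiag i)).add
    (((HasDerivAt.fun_sum fun i _ => hdiag i).const_sub
      (satMass abar ebar)).abs_of_differentiableAt hreg_m)
  have hij : i ≠ j := fun h => (Finset.mem_filter.1 hj).2 h.symm
  exact ((hsol.hasDerivAt_e ht hij).sub_const (ebar i j)).abs_of_differentiableAt (hreg_e i j hij)

end IsFluidSol

/-! ### The drift of `V` as a sum over stations -/

noncomputable section Algebra

variable {r : ℕ}

def signRow (m v : Mat r) (i : Fin r) : ℝ := ∑ j, m i j * Real.sign (v i j)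

def offSignRow (m v : Mat r) (i : Fin r) : ℝ :=
  ∑ j ∈ Finset.univ.filter (fun j => j ≠ i), m i j * Real.sign (v i j)

/-- The equilibrium rate `λ i * abar i` of served arrivals minus the current one. -/
def rateGap (np : NetParams r) (abar w : Fin r → ℝ) (i : Fin r) : ℝ :=
  np.lam i * (abar i + w i - 1)

/-- The slope of `lyapV` in the diagonal coordinate `x i i`. -/
def diagSlope (abar : Fin r → ℝ) (ebar x : Mat r) (i : Fin r) : ℝ :=
  if abar i < 1 then 1 else -Real.sign (satMass abar ebar - satMass abar x)

/-- Where `x i i = 0` the diagonal drift vanishes, so `diagSlope` may be replaced by the row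
average `signRow`, which cancels the first term of `stationTerm`. -/
def stationCoeff (np : NetParams r) (ebar fbar : Mat r) (abar : Fin r → ℝ) (x y : Mat r)
    (i : Fin r) : ℝ :=
  if x i i = 0 then signRow np.P (y - fbar) i else diagSlope abar ebar x i

def stationTerm (np : NetParams r) (Q : Mat r) (abar w : Fin r → ℝ) (φ ε : Mat r) (c : ℝ)
    (i : Fin r) : ℝ :=
  rateGap np abar w i * (c - signRow np.P φ i)
    + (c * offColSum np.mu ε i - offColSum np.mu |ε| i)
    + ((c * Q i i + offSignRow Q ε i) * colSum np.mu φ i - colSum np.mu |φ| i)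

lemma colSum_sub (m a b : Mat r) (i : Fin r) :
    colSum m (a - b) i = colSum m a i - colSum m b i := by
  simp only [colSum, Pi.sub_apply, mul_sub, sum_sub_distrib]

lemma offColSum_sub (m a b : Mat r) (i : Fin r) :
    offColSum m (a - b) i = offColSum m a i - offColSum m b i := by
  simp only [offColSum, Pi.sub_apply, mul_sub, sum_sub_distrib]

lemma sum_eq_sum_offdiag_add_sum_diag (F : Mat r) :
    ∑ i, ∑ j, F i j = ∑ i, ∑ j ∈ Finset.univ.filter (fun j => j ≠ i), F i j + ∑ i, F i i := by
  rw [← sum_add_distrib]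
  exact sum_congr rfl fun i _ => by rw [filter_ne', sum_erase_add _ _ (mem_univ i)]

lemma sum_offdiag_comm (F : Mat r) :
    ∑ i, ∑ j ∈ Finset.univ.filter (fun j => j ≠ i), F i j
      = ∑ i, ∑ j ∈ Finset.univ.filter (fun j => j ≠ i), F j i :=
  sum_comm' fun i j => by simp [ne_comm]

lemma sum_eq_sum_lt_one_add_sum_eq_one {abar : Fin r → ℝ} (habar : ∀ i, abar i ≤ 1)
    (g : Fin r → ℝ) : ∑ i, g i = ∑ i ∈ Finset.univ.filter (fun i => abar i < 1), g i
      + ∑ i ∈ Finset.univ.filter (fun i => abar i = 1), g i := by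
  rw [← sum_filter_add_sum_filter_not univ (fun i => abar i < 1)]
  congr 1
  exact sum_congr (filter_congr fun i _ => by simp [le_antisymm_iff, habar i]) fun _ _ => rfl

lemma sum_diagSlope_mul {abar : Fin r → ℝ} (habar : ∀ i, abar i ≤ 1) (ebar x : Mat r)
    (D : Fin r → ℝ) : ∑ i, diagSlope abar ebar x i * D i
      = ∑ i ∈ Finset.univ.filter (fun i => abar i < 1), D i
        + Real.sign (satMass abar ebar - satMass abar x)
          * -∑ i ∈ Finset.univ.filter (fun i => abar i = 1), D i := by
  rw [sum_eq_sum_lt_one_add_sum_eq_one habar, mul_neg, mul_sum, ← sum_neg_distrib]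
  congr 1 <;> refine sum_congr rfl fun i hi => ?_ <;> simp [diagSlope, (mem_filter.1 hi).2]

lemma abs_signRow_le_one (np : NetParams r) (v : Mat r) (i : Fin r) :
    |signRow np.P v i| ≤ 1 := calc
  |signRow np.P v i| ≤ ∑ j, |np.P i j * Real.sign (v i j)| := abs_sum_le_sum_abs _ _
  _ ≤ ∑ j, np.P i j := sum_le_sum fun j _ => by
    rw [abs_mul, abs_of_nonneg (np.P_nonneg i j)]
    exact mul_le_of_le_one_right (np.P_nonneg i j) (Real.abs_sign_le_one _)
  _ = 1 := np.P_rowsum i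

lemma signRow_eq_of_abs_eq_one {r : ℕ} {np : NetParams r} (hP : ∀ i j, 0 < np.P i j)
    {v : Mat r} {i : Fin r} (h : |signRow np.P v i| = 1) :
    ∀ j, Real.sign (v i j) = signRow np.P v i :=
  eq_of_sum_mul_eq_of_abs_eq_one (hP i) (np.P_rowsum i) (fun _ => Real.abs_sign_le_one _) h rfl

lemma abs_offSignRow_le {Q : Mat r} (hQ : IsRouting Q) (v : Mat r) (i : Fin r) :
    |offSignRow Q v i| ≤ 1 - Q i i := calc
  |offSignRow Q v i| ≤ ∑ j ∈ Finset.univ.filter (fun j => j ≠ i), |Q i j * Real.sign (v i j)| :=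
    abs_sum_le_sum_abs _ _
  _ ≤ ∑ j ∈ Finset.univ.filter (fun j => j ≠ i), Q i j := sum_le_sum fun j _ => by
    rw [abs_mul, abs_of_nonneg (hQ.1 i j)]
    exact mul_le_of_le_one_right (hQ.1 i j) (Real.abs_sign_le_one _)
  _ = 1 - Q i i := by rw [filter_ne', sum_erase_eq_sub (mem_univ i), hQ.2 i]

lemma abs_diagSlope_le_one (abar : Fin r → ℝ) (ebar x : Mat r) (i : Fin r) :
    |diagSlope abar ebar x i| ≤ 1 := by
  unfold diagSlope
  split_ifs
  · simp
  · rw [abs_neg]; exact Real.abs_sign_le_one _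

lemma abs_stationCoeff_le_one (np : NetParams r) (ebar fbar : Mat r) (abar : Fin r → ℝ)
    (x y : Mat r) (i : Fin r) : |stationCoeff np ebar fbar abar x y i| ≤ 1 := by
  unfold stationCoeff
  split_ifs
  · exact abs_signRow_le_one np _ i
  · exact abs_diagSlope_le_one abar ebar x i

end Algebra

section Identities

variable {r : ℕ} {np : NetParams r} {Q ebar fbar : Mat r} {abar w : Fin r → ℝ} {x y : Mat r}

lemma fDrift_eq (hbal : ∀ i j, np.lam i * np.P i j * abar i = np.mu i j * fbar i j) (i j : Fin r) :
    fDrift np w y i j = -(np.mu i j * (y - fbar) i j) - np.P i j * rateGap np abar w i := by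
  simp only [fDrift, rateGap, Pi.sub_apply]
  linear_combination hbal i j

lemma eDrift_eq (heq : IsEquilibrium np Q ebar fbar abar) {i j : Fin r} (hij : i ≠ j) :
    eDrift np Q x y i j = -(np.mu i j * (x - ebar) i j) + Q i j * colSum np.mu (y - fbar) i := by
  rw [eDrift, colSum_sub]
  simp only [colSum, Pi.sub_apply]
  linear_combination -heq.balance_e i j hij

lemma eDiagDrift_eq (heq : IsEquilibrium np Q ebar fbar abar) (i : Fin r) :
    eDiagDrift np Q w x y i = rateGap np abar w i + offColSum np.mu (x - ebar) i
      + Q i i * colSum np.mu (y - fbar) i := by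
  rw [eDiagDrift, rateGap, colSum_sub, offColSum_sub]
  simp only [colSum, offColSum]
  linear_combination -heq.balance_diag i

lemma sum_sign_mul_fDrift (hbal : ∀ i j, np.lam i * np.P i j * abar i = np.mu i j * fbar i j) :
    ∑ i, ∑ j, Real.sign (y i j - fbar i j) * fDrift np w y i j
      = ∑ i, (-colSum np.mu |y - fbar| i - rateGap np abar w i * signRow np.P (y - fbar) i) := by
  have hterm : ∀ i j, Real.sign (y i j - fbar i j) * fDrift np w y i j
      = -(np.mu i j * |y - fbar| i j)
        - rateGap np abar w i * (np.P i j * Real.sign ((y - fbar) i j)) := by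
    intro i j
    simp only [fDrift_eq hbal, Pi.abs_apply, Pi.sub_apply]
    rw [← Real.sign_mul_self_eq_abs]; ring
  simp only [hterm, sum_sub_distrib, sum_neg_distrib, colSum, signRow, mul_sum]
  rw [sum_comm (f := fun i j => np.mu i j * |y - fbar| i j)]

lemma sum_sign_mul_eDrift (heq : IsEquilibrium np Q ebar fbar abar) :
    ∑ i, ∑ j ∈ Finset.univ.filter (fun j => j ≠ i),
        Real.sign (x i j - ebar i j) * eDrift np Q x y i j
      = ∑ i, (-offColSum np.mu |x - ebar| i
          + offSignRow Q (x - ebar) i * colSum np.mu (y - fbar) i) := by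
  have hterm : ∀ i, ∀ j ∈ Finset.univ.filter (fun j => j ≠ i),
      Real.sign (x i j - ebar i j) * eDrift np Q x y i j = -(np.mu i j * |x - ebar| i j)
        + Q i j * Real.sign ((x - ebar) i j) * colSum np.mu (y - fbar) i := by
    intro i j hj
    rw [eDrift_eq heq (Ne.symm (mem_filter.1 hj).2)]
    simp only [Pi.abs_apply, Pi.sub_apply]
    rw [← Real.sign_mul_self_eq_abs]; ring
  rw [sum_congr rfl fun i _ => sum_congr rfl (hterm i)]
  simp only [sum_add_distrib, sum_neg_distrib, offColSum, offSignRow, sum_mul]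
  rw [sum_offdiag_comm (fun i j => np.mu i j * |x - ebar| i j)]

lemma lyapDrift_eq_sum_stationTerm (heq : IsEquilibrium np Q ebar fbar abar) {c : Fin r → ℝ}
    (hc : ∀ i, c i = diagSlope abar ebar x i ∨ eDiagDrift np Q w x y i = 0) :
    lyapDrift np Q ebar fbar abar w x y
      = ∑ i, stationTerm np Q abar w (y - fbar) (x - ebar) (c i) i := by
  have hdiag : ∑ i, c i * eDiagDrift np Q w x y i
      = ∑ i, diagSlope abar ebar x i * eDiagDrift np Q w x y i :=
    sum_congr rfl fun i _ => by rcases hc i with h | h <;> simp [h]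
  rw [lyapDrift, add_assoc, ← sum_diagSlope_mul (fun i => (heq.abar_mem i).2), ← hdiag,
    sum_sign_mul_fDrift heq.balance_f, sum_sign_mul_eDrift heq, ← sum_add_distrib,
    ← sum_add_distrib]
  refine sum_congr rfl fun i _ => ?_
  rw [eDiagDrift_eq heq, stationTerm]
  ring

end Identities

section Station

variable {r : ℕ} {np : NetParams r} {Q : Mat r} {abar w : Fin r → ℝ} {φ ε : Mat r} {c : ℝ}
  {i : Fin r}

lemma mul_colSum_le (hc : |c| ≤ 1) : c * colSum np.mu φ i ≤ colSum np.mu |φ| i :=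
  mul_sum_le_sum_mul_abs hc fun k _ => (np.mu_pos k i).le

lemma mul_offColSum_le (hc : |c| ≤ 1) : c * offColSum np.mu ε i ≤ offColSum np.mu |ε| i :=
  mul_sum_le_sum_mul_abs hc fun k _ => (np.mu_pos k i).le

lemma mul_eq_abs_of_mul_colSum_eq (hc : |c| ≤ 1)
    (h : c * colSum np.mu φ i = colSum np.mu |φ| i) (k : Fin r) : c * φ k i = |φ k i| :=
  mul_eq_abs_of_mul_sum_eq (v := fun k => φ k i) hc (fun k _ => np.mu_pos k i) h k (mem_univ k)

lemma mul_eq_abs_of_mul_offColSum_eq (hc : |c| ≤ 1)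
    (h : c * offColSum np.mu ε i = offColSum np.mu |ε| i) {k : Fin r} (hk : k ≠ i) :
    c * ε k i = |ε k i| :=
  mul_eq_abs_of_mul_sum_eq (v := fun k => ε k i) hc (fun k _ => np.mu_pos k i) h k
    (mem_filter.2 ⟨mem_univ k, hk⟩)

lemma abs_mul_add_offSignRow_le (hQ : IsRouting Q) (hQd : 0 < Q i i) (hc : |c| ≤ 1) :
    |c * Q i i + offSignRow Q ε i| ≤ 1 := by
  have hK := abs_offSignRow_le hQ ε i
  calc |c * Q i i + offSignRow Q ε i| ≤ |c * Q i i| + |offSignRow Q ε i| := abs_add_le _ _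
    _ ≤ 1 * Q i i + (1 - Q i i) := by rw [abs_mul, abs_of_pos hQd]; gcongr
    _ = 1 := by ring

lemma stationTerm_nonpos (hQ : IsRouting Q) (hQd : 0 < Q i i) (hc : |c| ≤ 1)
    (hgap : rateGap np abar w i * (c - signRow np.P φ i) ≤ 0) :
    stationTerm np Q abar w φ ε c i ≤ 0 := by
  have hε := mul_offColSum_le (np := np) (ε := ε) (i := i) hc
  have hφ := mul_colSum_le (np := np) (φ := φ) (i := i)
    (abs_mul_add_offSignRow_le (ε := ε) hQ hQd hc)
  rw [stationTerm]
  linarith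

lemma stationTerm_eq_zero (hQ : IsRouting Q) (hQd : 0 < Q i i) (hc : |c| ≤ 1)
    (hgap : rateGap np abar w i * (c - signRow np.P φ i) ≤ 0)
    (h : stationTerm np Q abar w φ ε c i = 0) :
    rateGap np abar w i * (c - signRow np.P φ i) = 0 ∧ (∀ k, k ≠ i → c * ε k i = |ε k i|)
      ∧ ∀ k, c * φ k i = |φ k i| := by
  have hg := abs_mul_add_offSignRow_le (ε := ε) hQ hQd hc
  have hε := mul_offColSum_le (np := np) (ε := ε) (i := i) hc
  have hφ := mul_colSum_le (np := np) (φ := φ) (i := i) hg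
  rw [stationTerm] at h
  refine ⟨by linarith, fun k hk => ?_, fun k => ?_⟩
  · exact mul_eq_abs_of_mul_offColSum_eq hc (by linarith) hk
  · have hk := mul_eq_abs_of_mul_colSum_eq (np := np) (φ := φ) hg (by linarith) k
    rcases eq_or_ne (φ k i) 0 with h0 | h0
    · simp [h0]
    · rwa [mul_add_eq_self_of_abs_eq_one hQd (abs_offSignRow_le hQ ε i) hc
        (abs_eq_one_of_mul_eq_abs h0 hk)] at hk

end Station

section Nonpos

variable {r : ℕ} {np : NetParams r} {Q ebar fbar : Mat r} {abar w : Fin r → ℝ} {x y : Mat r}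

lemma IsRegularState.stationCoeff_eq_or (hs : IsRegularState np Q w x y) (i : Fin r) :
    stationCoeff np ebar fbar abar x y i = diagSlope abar ebar x i
      ∨ eDiagDrift np Q w x y i = 0 := by
  by_cases hx : x i i = 0
  · exact Or.inr (hs.diag_drift_eq_zero i hx)
  · exact Or.inl (if_neg hx)

lemma IsRegularState.rateGap_eq_of_pos (hs : IsRegularState np Q w x y) {i : Fin r}
    (hx : 0 < x i i) : rateGap np abar w i = np.lam i * (abar i - 1) := by
  rw [rateGap, hs.idle_eq_zero i hx, add_zero]

lemma IsRegularState.rateGap_mul_stationCoeff_sub_nonpos (hs : IsRegularState np Q w x y)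
    (habar : ∀ i, 0 ≤ abar i ∧ abar i ≤ 1) (i : Fin r) :
    rateGap np abar w i * (stationCoeff np ebar fbar abar x y i - signRow np.P (y - fbar) i)
      ≤ 0 := by
  rcases ((hs.mem.1 i i).1).eq_or_lt with hx | hx
  · simp [stationCoeff, ← hx]
  rw [stationCoeff, if_neg hx.ne', hs.rateGap_eq_of_pos hx, diagSlope]
  split_ifs with ha
  · exact mul_nonpos_of_nonpos_of_nonneg
      (mul_nonpos_of_nonneg_of_nonpos (np.lam_pos i).le (by linarith))
      (sub_nonneg.2 (le_of_abs_le (abs_signRow_le_one np _ i)))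
  · simp [le_antisymm (habar i).2 (not_lt.1 ha)]

theorem lyapDrift_nonpos (hQ : IsRouting Q) (hQd : ∀ i, 0 < Q i i)
    (heq : IsEquilibrium np Q ebar fbar abar) (hs : IsRegularState np Q w x y) :
    lyapDrift np Q ebar fbar abar w x y ≤ 0 := by
  rw [lyapDrift_eq_sum_stationTerm heq hs.stationCoeff_eq_or]
  exact sum_nonpos fun i _ => stationTerm_nonpos hQ (hQd i) (abs_stationCoeff_le_one ..)
    (hs.rateGap_mul_stationCoeff_sub_nonpos heq.abar_mem i)

end Nonpos

/-! ### Vanishing drift -/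

section Tight

variable {r : ℕ} {np : NetParams r} {Q ebar fbar : Mat r} {abar w : Fin r → ℝ} {x y : Mat r}

lemma IsEquilibrium.mass_dev_eq_zero (heq : IsEquilibrium np Q ebar fbar abar)
    (hxy : MemT x y) :
    ∑ k, ∑ i, (y - fbar) k i + ∑ k, ∑ i ∈ Finset.univ.filter (fun i => i ≠ k), (x - ebar) k i
      + (∑ i ∈ Finset.univ.filter (fun i => abar i < 1), x i i
        + (satMass abar x - satMass abar ebar)) = 0 := by
  have habar := fun i => (heq.abar_mem i).2
  have hebar : ∑ i ∈ Finset.univ.filter (fun i => abar i < 1), ebar i i = 0 :=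
    sum_eq_zero fun i hi => (mul_eq_zero.1 (heq.compl i)).resolve_left
      (sub_ne_zero.2 (mem_filter.1 hi).2.ne')
  have hx := hxy.2.2
  have he := heq.mem.2.2
  simp only [sum_add_distrib] at hx he
  rw [sum_eq_sum_offdiag_add_sum_diag x,
    sum_eq_sum_lt_one_add_sum_eq_one habar fun i => x i i] at hx
  rw [sum_eq_sum_offdiag_add_sum_diag ebar,
    sum_eq_sum_lt_one_add_sum_eq_one habar fun i => ebar i i, hebar] at he
  simp only [Pi.sub_apply, sum_sub_distrib, satMass]
  linarith

/-- Deviations that all have the sign of `s` cannot cancel in the mass balance. -/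
lemma IsEquilibrium.dev_eq_zero_of_aligned (heq : IsEquilibrium np Q ebar fbar abar)
    (hxy : MemT x y) {s : ℝ} (hf : ∀ k i, s * (y - fbar) k i = |(y - fbar) k i|)
    (he : ∀ k i, k ≠ i → s * (x - ebar) k i = |(x - ebar) k i|)
    (hs : 0 ≤ s * (∑ i ∈ Finset.univ.filter (fun i => abar i < 1), x i i
        + (satMass abar x - satMass abar ebar))) :
    (∀ k i, (y - fbar) k i = 0) ∧ ∀ k i, k ≠ i → (x - ebar) k i = 0 := by
  have hsf : s * ∑ k, ∑ i, (y - fbar) k i = ∑ k, ∑ i, |(y - fbar) k i| := by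
    simp only [mul_sum, hf]
  have hse : s * ∑ k, ∑ i ∈ Finset.univ.filter (fun i => i ≠ k), (x - ebar) k i
      = ∑ k, ∑ i ∈ Finset.univ.filter (fun i => i ≠ k), |(x - ebar) k i| := by
    simp only [mul_sum]
    exact sum_congr rfl fun k _ => sum_congr rfl fun i hi => he k i (Ne.symm (mem_filter.1 hi).2)
  have hmass := congrArg (s * ·) (heq.mass_dev_eq_zero hxy)
  simp only [mul_add, mul_zero, hsf, hse] at hmass
  have hfa : 0 ≤ ∑ k, ∑ i, |(y - fbar) k i| :=
    sum_nonneg fun _ _ => sum_nonneg fun _ _ => abs_nonneg _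
  have hea : 0 ≤ ∑ k, ∑ i ∈ Finset.univ.filter (fun i => i ≠ k), |(x - ebar) k i| :=
    sum_nonneg fun _ _ => sum_nonneg fun _ _ => abs_nonneg _
  exact ⟨fun k i => eq_zero_of_sum_sum_abs_nonpos (t := fun _ => univ) (by linarith) k i
      (mem_univ i),
    fun k i hki => eq_zero_of_sum_sum_abs_nonpos (by linarith) k i
      (mem_filter.2 ⟨mem_univ i, hki.symm⟩)⟩

/-- The equality cases of the estimates in `stationTerm_nonpos` for `c = stationCoeff`. -/
structure IsTight (np : NetParams r) (ebar fbar : Mat r) (abar w : Fin r → ℝ) (x y : Mat r) :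
    Prop where
  gap : ∀ i, rateGap np abar w i
    * (stationCoeff np ebar fbar abar x y i - signRow np.P (y - fbar) i) = 0
  col_e : ∀ k i, k ≠ i → stationCoeff np ebar fbar abar x y i * (x - ebar) k i = |(x - ebar) k i|
  col_f : ∀ k i, stationCoeff np ebar fbar abar x y i * (y - fbar) k i = |(y - fbar) k i|

lemma isTight_of_lyapDrift_eq_zero (hQ : IsRouting Q) (hQd : ∀ i, 0 < Q i i)
    (heq : IsEquilibrium np Q ebar fbar abar) (hs : IsRegularState np Q w x y)
    (h : lyapDrift np Q ebar fbar abar w x y = 0) : IsTight np ebar fbar abar w x y := by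
  rw [lyapDrift_eq_sum_stationTerm heq hs.stationCoeff_eq_or] at h
  have hgap := hs.rateGap_mul_stationCoeff_sub_nonpos (ebar := ebar) (fbar := fbar) heq.abar_mem
  have hc := abs_stationCoeff_le_one np ebar fbar abar x y
  have hzero := (sum_eq_zero_iff_of_nonpos fun i _ =>
    stationTerm_nonpos (ε := x - ebar) hQ (hQd i) (hc i) (hgap i)).1 h
  have htight := fun i => stationTerm_eq_zero hQ (hQd i) (hc i) (hgap i) (hzero i (mem_univ i))
  exact ⟨fun i => (htight i).1, fun k i hki => (htight i).2.1 k hki, fun k i => (htight i).2.2 k⟩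

lemma false_of_stationCoeff_eq_neg_one (heq : IsEquilibrium np Q ebar fbar abar)
    (hc : ∀ j, stationCoeff np ebar fbar abar x y j = -1)
    (hpos : 0 < ∑ i ∈ Finset.univ.filter (fun i => abar i < 1), x i i
      + (satMass abar x - satMass abar ebar)) : False := by
  have hbusy : ∀ j, x j j ≠ 0 →
      abar j = 1 ∧ Real.sign (satMass abar ebar - satMass abar x) = 1 := by
    intro j hx
    have hcj := hc j
    rw [stationCoeff, if_neg hx, diagSlope] at hcj
    split_ifs at hcj with ha
    · norm_num at hcj
    · exact ⟨le_antisymm (heq.abar_mem j).2 (not_lt.1 ha), by linarith⟩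
  have hX : ∑ i ∈ Finset.univ.filter (fun i => abar i < 1), x i i = 0 :=
    sum_eq_zero fun j hj => by_contra fun hx => (mem_filter.1 hj).2.ne (hbusy j hx).1
  have hsign : Real.sign (satMass abar ebar - satMass abar x) = -1 :=
    Real.sign_of_neg (by linarith)
  have hM : satMass abar x = 0 :=
    sum_eq_zero fun j _ => by_contra fun hx => by
      have h1 := (hbusy j hx).2
      rw [hsign] at h1
      norm_num at h1
  have hm : 0 ≤ satMass abar ebar := sum_nonneg fun j _ => (heq.mem.1 j j).1
  linarith

namespace IsTight

lemma rateGap_neg (ht : IsTight np ebar fbar abar w x y) (hP : ∀ i j, 0 < np.P i j)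
    (hQd : ∀ i, 0 < Q i i) (heq : IsEquilibrium np Q ebar fbar abar)
    (hs : IsRegularState np Q w x y) {j : Fin r} (hx : x j j = 0)
    (hS : signRow np.P (y - fbar) j = 1) : rateGap np abar w j < 0 := by
  have hc : stationCoeff np ebar fbar abar x y j = 1 := (if_pos hx).trans hS
  have hjj : 0 < (y - fbar) j j :=
    Real.sign_eq_one_iff.1 ((signRow_eq_of_abs_eq_one hP (by rw [hS, abs_one]) j).trans hS)
  have hf : ∀ k, 0 ≤ (y - fbar) k j := fun k => by
    have h := ht.col_f k j
    rw [hc, one_mul] at h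
    rw [h]; exact abs_nonneg _
  have hW : 0 < colSum np.mu (y - fbar) j :=
    sum_pos' (fun k _ => mul_nonneg (np.mu_pos k j).le (hf k))
      ⟨j, mem_univ j, mul_pos (np.mu_pos j j) hjj⟩
  have hR : 0 ≤ offColSum np.mu (x - ebar) j := sum_nonneg fun k hk =>
    mul_nonneg (np.mu_pos k j).le <| by
      have h := ht.col_e k j (mem_filter.1 hk).2
      rw [hc, one_mul] at h
      rw [h]; exact abs_nonneg _
  have hD := hs.diag_drift_eq_zero j hx
  rw [eDiagDrift_eq heq] at hD
  nlinarith [mul_pos (hQd j) hW]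

lemma false_of_stationCoeff_eq_one (ht : IsTight np ebar fbar abar w x y)
    (hP : ∀ i j, 0 < np.P i j) (hQd : ∀ i, 0 < Q i i) (heq : IsEquilibrium np Q ebar fbar abar)
    (hs : IsRegularState np Q w x y) (hc : ∀ j, stationCoeff np ebar fbar abar x y j = 1)
    (hneg : ∑ i ∈ Finset.univ.filter (fun i => abar i < 1), x i i
      + (satMass abar x - satMass abar ebar) < 0) : False := by
  have hX : 0 ≤ ∑ i ∈ Finset.univ.filter (fun i => abar i < 1), x i i :=
    sum_nonneg fun j _ => (hs.mem.1 j j).1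
  have hsign : Real.sign (satMass abar ebar - satMass abar x) = 1 := Real.sign_of_pos (by linarith)
  have hsat : ∀ j, abar j ≠ 1 := by
    intro j ha
    rcases (hs.mem.1 j j).1.eq_or_lt with hx | hx
    · have hgap := ht.rateGap_neg hP hQd heq hs hx.symm ((if_pos hx.symm).symm.trans (hc j))
      rw [rateGap, ha] at hgap
      nlinarith [hs.idle_nonneg j, np.lam_pos j]
    · have hcj := hc j
      rw [stationCoeff, if_neg hx.ne', diagSlope, if_neg (by rw [ha]; exact lt_irrefl 1), hsign]
        at hcj
      norm_num at hcj
  have hempty : ∀ F : Mat r, satMass abar F = 0 := fun F =>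
    sum_eq_zero fun j hj => absurd (mem_filter.1 hj).2 (hsat j)
  rw [hempty, hempty] at hneg
  linarith

/-- A row of `f - f̄` of constant sign would make all columns, hence all deviations, share that
sign, which the mass balance rules out. -/
lemma abs_signRow_ne_one (ht : IsTight np ebar fbar abar w x y) (hP : ∀ i j, 0 < np.P i j)
    (hQd : ∀ i, 0 < Q i i) (heq : IsEquilibrium np Q ebar fbar abar)
    (hs : IsRegularState np Q w x y) (i : Fin r) : |signRow np.P (y - fbar) i| ≠ 1 := by
  intro h
  have hrow := signRow_eq_of_abs_eq_one hP h
  have hne : ∀ j, (y - fbar) i j ≠ 0 := fun j h0 => by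
    have := hrow j
    rw [h0, Real.sign_zero] at this
    rw [← this, abs_zero] at h
    exact zero_ne_one h
  have hc : ∀ j, stationCoeff np ebar fbar abar x y j = signRow np.P (y - fbar) i := fun j =>
    (eq_sign_of_mul_eq_abs (hne j) (ht.col_f i j)).trans (hrow j)
  have hmass : signRow np.P (y - fbar) i * (∑ i ∈ Finset.univ.filter (fun i => abar i < 1), x i i
      + (satMass abar x - satMass abar ebar)) < 0 := by
    by_contra hnn
    refine hne i ((heq.dev_eq_zero_of_aligned hs.mem (fun k j => ?_) (fun k j hkj => ?_)
      (not_lt.1 hnn)).1 i i)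
    · rw [← hc j]; exact ht.col_f k j
    · rw [← hc j]; exact ht.col_e k j hkj
  rcases (abs_eq zero_le_one).1 h with h1 | h1 <;> rw [h1] at hc hmass
  · exact ht.false_of_stationCoeff_eq_one hP hQd heq hs hc (by linarith)
  · exact false_of_stationCoeff_eq_neg_one heq hc (by linarith)

lemma col_eq_zero (ht : IsTight np ebar fbar abar w x y) (hP : ∀ i j, 0 < np.P i j)
    (hQd : ∀ i, 0 < Q i i) (heq : IsEquilibrium np Q ebar fbar abar)
    (hs : IsRegularState np Q w x y) {i : Fin r} (hx : x i i = 0) :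
    (∀ k, (y - fbar) k i = 0) ∧ ∀ k, k ≠ i → (x - ebar) k i = 0 := by
  have hS := ht.abs_signRow_ne_one hP hQd heq hs i
  rw [← (if_pos hx : stationCoeff np ebar fbar abar x y i = _)] at hS
  exact ⟨fun k => by_contra fun h => hS (abs_eq_one_of_mul_eq_abs h (ht.col_f k i)),
    fun k hk => by_contra fun h => hS (abs_eq_one_of_mul_eq_abs h (ht.col_e k i hk))⟩

lemma abar_eq_one (ht : IsTight np ebar fbar abar w x y) (hP : ∀ i j, 0 < np.P i j)
    (hQd : ∀ i, 0 < Q i i) (heq : IsEquilibrium np Q ebar fbar abar)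
    (hs : IsRegularState np Q w x y) {i : Fin r} (hx : 0 < x i i) : abar i = 1 := by
  by_contra ha
  have ha' : abar i < 1 := lt_of_le_of_ne (heq.abar_mem i).2 ha
  have hgap := ht.gap i
  rw [stationCoeff, if_neg hx.ne', diagSlope, if_pos ha', hs.rateGap_eq_of_pos hx] at hgap
  have hS : signRow np.P (y - fbar) i = 1 := by
    rcases mul_eq_zero.1 hgap with h | h
    · nlinarith [np.lam_pos i]
    · linarith
  exact ht.abs_signRow_ne_one hP hQd heq hs i (by rw [hS, abs_one])

lemma dev_eq_zero (ht : IsTight np ebar fbar abar w x y) (hP : ∀ i j, 0 < np.P i j)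
    (hQd : ∀ i, 0 < Q i i) (heq : IsEquilibrium np Q ebar fbar abar)
    (hs : IsRegularState np Q w x y) :
    (∀ k i, (y - fbar) k i = 0) ∧ ∀ k i, k ≠ i → (x - ebar) k i = 0 := by
  set σ := Real.sign (satMass abar ebar - satMass abar x) with hσ
  have hc : ∀ i, 0 < x i i → stationCoeff np ebar fbar abar x y i = -σ := fun i hx =>
    (if_neg hx.ne').trans (if_neg (by rw [ht.abar_eq_one hP hQd heq hs hx]; exact lt_irrefl 1))
  have hX : ∑ i ∈ Finset.univ.filter (fun i => abar i < 1), x i i = 0 :=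
    sum_eq_zero fun i hi => by_contra fun hx => (mem_filter.1 hi).2.ne
      (ht.abar_eq_one hP hQd heq hs (lt_of_le_of_ne (hs.mem.1 i i).1 (Ne.symm hx)))
  refine heq.dev_eq_zero_of_aligned hs.mem (s := -σ) (fun k i => ?_) (fun k i hki => ?_) ?_
  · rcases (hs.mem.1 i i).1.eq_or_lt with hx | hx
    · simp [(ht.col_eq_zero hP hQd heq hs hx.symm).1 k]
    · rw [← hc i hx]; exact ht.col_f k i
  · rcases (hs.mem.1 i i).1.eq_or_lt with hx | hx
    · simp [(ht.col_eq_zero hP hQd heq hs hx.symm).2 k hki]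
    · rw [← hc i hx]; exact ht.col_e k i hki
  · rw [hX, zero_add, show -σ * (satMass abar x - satMass abar ebar)
      = σ * (satMass abar ebar - satMass abar x) by ring, hσ, Real.sign_mul_self_eq_abs]
    exact abs_nonneg _

theorem isEquilibrium (ht : IsTight np ebar fbar abar w x y) (hP : ∀ i j, 0 < np.P i j)
    (hQd : ∀ i, 0 < Q i i) (heq : IsEquilibrium np Q ebar fbar abar)
    (hs : IsRegularState np Q w x y) : IsEquilibrium np Q x y abar := by
  obtain ⟨hf, he⟩ := ht.dev_eq_zero hP hQd heq hs
  obtain rfl : y = fbar := funext fun k => funext fun i => sub_eq_zero.1 (hf k i)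
  have hx : ∀ k i, k ≠ i → x k i = ebar k i := fun k i hki => sub_eq_zero.1 (he k i hki)
  refine ⟨hs.mem, heq.abar_mem, heq.balance_f, fun i j hij => ?_, fun i => ?_, fun i => ?_⟩
  · rw [hx i j hij]; exact heq.balance_e i j hij
  · rw [heq.balance_diag i]
    congr 1
    exact sum_congr rfl fun k hk => by rw [hx k i (mem_filter.1 hk).2]
  · rcases (hs.mem.1 i i).1.eq_or_lt with h0 | hpos
    · rw [← h0, mul_zero]
    · rw [ht.abar_eq_one hP hQd heq hs hpos, sub_self, zero_mul]

end IsTight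

end Tight

theorem stmt_13_general {r : ℕ} (np : NetParams r)
    (Q : Mat r) (hQ : IsRouting Q)
    (hP : ∀ i j, 0 < np.P i j) (hQd : ∀ i, 0 < Q i i)
    (e f : ℝ → Mat r) (u : ℝ → Fin r → ℝ)
    (hsol : IsFluidSol np Q e f u)
    (ebar fbar : Mat r) (abar : Fin r → ℝ)
    (hmem : MemT ebar fbar)
    (habar : ∀ i, 0 ≤ abar i ∧ abar i ≤ 1)
    (heq1 : ∀ i j, np.lam i * np.P i j * abar i = np.mu i j * fbar i j)
    (heq2 : ∀ i j, i ≠ j → np.mu i j * ebar i j = Q i j * ∑ k, np.mu k i * fbar k i)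
    (heq3 : ∀ i, np.lam i * abar i =
      (∑ k ∈ Finset.univ.filter (fun k => k ≠ i), np.mu k i * ebar k i)
        + Q i i * ∑ k, np.mu k i * fbar k i)
    (heq4 : ∀ i, (1 - abar i) * ebar i i = 0)
    (t : ℝ) (ht : 0 < t)
    (hreg_diag : ∀ i, DifferentiableAt ℝ (fun s => e s i i) t)
    (hreg_f : ∀ i j, DifferentiableAt ℝ (fun s => |f s i j - fbar i j|) t)
    (hreg_e : ∀ i j, i ≠ j → DifferentiableAt ℝ (fun s => |e s i j - ebar i j|) t)
    (hreg_m : DifferentiableAt ℝ (fun s =>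
      |(∑ i ∈ Finset.univ.filter (fun i => abar i = 1), ebar i i)
        - ∑ i ∈ Finset.univ.filter (fun i => abar i = 1), e s i i|) t) :
    ∃ d : ℝ, HasDerivAt (fun s => lyapV ebar fbar abar (e s) (f s)) d t ∧
      d ≤ 0 ∧ ((e t, f t) ∉ eqSet np Q → d < 0) := by
  have heq : IsEquilibrium np Q ebar fbar abar := ⟨hmem, habar, heq1, heq2, heq3, heq4⟩
  have hw : ∀ i, HasDerivAt (fun s => u s i) (deriv (fun s => u s i) t) t :=
    fun i => (hsol.differentiableAt_u ht (hreg_diag i)).hasDerivAt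
  have hs := hsol.isRegularState ht hw
  have hle := lyapDrift_nonpos hQ hQd heq hs
  refine ⟨_, hsol.hasDerivAt_lyapV ht hw hreg_f hreg_e hreg_m, hle,
    fun hnot => hle.lt_of_ne fun h0 => hnot ?_⟩
  exact ((isTight_of_lyapDrift_eq_zero hQ hQd heq hs h0).isEquilibrium hP hQd heq hs).mem_eqSet

/-- Lemma 4: at every regular point `t > 0`, the Lyapunov function
`s ↦ V(e(s), f(s))` is differentiable with nonpositive derivative, strictly
negative whenever `(e(t), f(t)) ∉ ℰ`. -/
theorem stmt_13 {r : ℕ} (hr : 1 ≤ r) (np : NetParams r)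
    (Q : Mat r) (hQ : IsRouting Q)
    (hP : ∀ i j, 0 < np.P i j) (hQd : ∀ i, 0 < Q i i)
    (e f : ℝ → Mat r) (u : ℝ → Fin r → ℝ)
    (hsol : IsFluidSol np Q e f u)
    (ebar fbar : Mat r) (abar : Fin r → ℝ)
    (hmem : MemT ebar fbar)
    (habar : ∀ i, 0 ≤ abar i ∧ abar i ≤ 1)
    (heq1 : ∀ i j, np.lam i * np.P i j * abar i = np.mu i j * fbar i j)
    (heq2 : ∀ i j, i ≠ j → np.mu i j * ebar i j = Q i j * ∑ k, np.mu k i * fbar k i)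
    (heq3 : ∀ i, np.lam i * abar i =
      (∑ k ∈ Finset.univ.filter (fun k => k ≠ i), np.mu k i * ebar k i)
        + Q i i * ∑ k, np.mu k i * fbar k i)
    (heq4 : ∀ i, (1 - abar i) * ebar i i = 0)
    (t : ℝ) (ht : 0 < t)
    (hreg_diag : ∀ i, DifferentiableAt ℝ (fun s => e s i i) t)
    (hreg_f : ∀ i j, DifferentiableAt ℝ (fun s => |f s i j - fbar i j|) t)
    (hreg_e : ∀ i j, i ≠ j → DifferentiableAt ℝ (fun s => |e s i j - ebar i j|) t)
    (hreg_m : DifferentiableAt ℝ (fun s =>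
      |(∑ i ∈ Finset.univ.filter (fun i => abar i = 1), ebar i i)
        - ∑ i ∈ Finset.univ.filter (fun i => abar i = 1), e s i i|) t) :
    ∃ d : ℝ, HasDerivAt (fun s => lyapV ebar fbar abar (e s) (f s)) d t ∧
      d ≤ 0 ∧ ((e t, f t) ∉ eqSet np Q → d < 0) :=
  stmt_13_general np Q hQ hP hQd e f u hsol ebar fbar abar hmem habar heq1 heq2 heq3 heq4 t ht
    hreg_diag hreg_f hreg_e hreg_m
end

section
/- Let Q be a routing matrix and let (e, f, u) be a fluid model solution with (e(0), f(0)) ∈ 𝒯. Let L⁺ ⊆ 𝒯 be the set of positive limit points of the trajectory, i.e. L⁺ = {p ∈ 𝒯 : there exists a sequence t_n → ∞ with (e(t_n), f(t_n)) → p}. Then: (i) L⁺ is nonempty and compact; (ii) L⁺ is positively invariant, i.e. for every fluid model solution (ẽ, f̃, ũ) with (ẽ(0), f̃(0)) ∈ L⁺ one has (ẽ(t), f̃(t)) ∈ L⁺ for all t ≥ 0; and (iii) lim_{t→∞} inf_{x ∈ L⁺} |(e(t), f(t)) − x| = 0, where |·| denotes the entrywise maximum norm. -/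
open Finset Filter Topology MeasureTheory intervalIntegral

/-- The set `L⁺` of positive limit points of the trajectory `t ↦ (e(t), f(t))`. -/
def posLimitSet {r : ℕ} (e f : ℝ → Mat r) : Set (Mat r × Mat r) :=
  {p | ∃ tn : ℕ → ℝ, Tendsto tn atTop atTop ∧
    Tendsto (fun n => (e (tn n), f (tn n))) atTop (𝓝 p)}

/-!
The trajectory stays in the compact unit ball of `Mat r × Mat r`, so its cluster points at
infinity form a nonempty compact set that attracts it. For invariance, write the diagonal
`e t i i` as the Skorokhod reflection of a free process (`netput`) by the regulator
`λ_i u t i`. Minimality of the regulator bounds the difference of the regulators of two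
solutions by the difference of their free processes, which in turn is controlled by the
integrated distance of the solutions. Grönwall then gives
`dist (γ (s + t)) (γ' t) ≤ 2 dist (γ s) (γ' 0) e^{4Kt}`, with `K` the total service rate,
so `γ (t_n) → γ' 0` forces `γ (t_n + t) → γ' t`.
-/

open Set

theorem intervalIntegrable_of_continuousOn_Ici {g : ℝ → ℝ} (hg : ContinuousOn g (Ici 0))
    {a b : ℝ} (ha : 0 ≤ a) (hb : 0 ≤ b) : IntervalIntegrable g volume a b :=
  (hg.mono fun _ hx => le_trans (le_min ha hb) hx.1).intervalIntegrable

theorem integral_zero_add {g : ℝ → ℝ} (hg : ContinuousOn g (Ici 0)) {s t : ℝ} (hs : 0 ≤ s)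
    (ht : 0 ≤ t) :
    ∫ σ in (0:ℝ)..s + t, g σ = (∫ σ in (0:ℝ)..s, g σ) + ∫ σ in (0:ℝ)..t, g (s + σ) := by
  rw [integral_comp_add_left, add_zero, integral_add_adjacent_intervals
    (intervalIntegrable_of_continuousOn_Ici hg le_rfl hs)
    (intervalIntegrable_of_continuousOn_Ici hg hs (add_nonneg hs ht))]

theorem continuousOn_primitive_Ici {g : ℝ → ℝ} (hg : ContinuousOn g (Ici 0)) :
    ContinuousOn (fun t => ∫ s in (0:ℝ)..t, g s) (Ici 0) := fun t ht => by
  have ht' : (0:ℝ) ≤ t + 1 := by linarith [mem_Ici.1 ht]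
  have hc := continuousOn_primitive_interval' (μ := volume)
    (intervalIntegrable_of_continuousOn_Ici hg le_rfl ht') left_mem_uIcc
  rw [uIcc_of_le ht'] at hc
  refine (hc t ⟨ht, by linarith⟩).mono_of_mem_nhdsWithin ?_
  filter_upwards [self_mem_nhdsWithin, nhdsWithin_le_nhds (Iio_mem_nhds (lt_add_one t))]
    with s hs hs' using ⟨hs, le_of_lt hs'⟩

theorem abs_integral_sub_le_integral {g g' v : ℝ → ℝ} (hg : ContinuousOn g (Ici 0))
    (hg' : ContinuousOn g' (Ici 0)) (hv : ContinuousOn v (Ici 0))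
    (hgv : ∀ ρ, 0 ≤ ρ → |g ρ - g' ρ| ≤ v ρ) {σ t : ℝ} (hσ : 0 ≤ σ) (hσt : σ ≤ t) :
    |(∫ ρ in (0:ℝ)..σ, g ρ) - ∫ ρ in (0:ℝ)..σ, g' ρ| ≤ ∫ ρ in (0:ℝ)..t, v ρ := by
  have hvσ := intervalIntegrable_of_continuousOn_Ici hv le_rfl hσ
  rw [← integral_sub (intervalIntegrable_of_continuousOn_Ici hg le_rfl hσ)
    (intervalIntegrable_of_continuousOn_Ici hg' le_rfl hσ)]
  calc _ ≤ ∫ ρ in (0:ℝ)..σ, |g ρ - g' ρ| := abs_integral_le_integral_abs hσ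
    _ ≤ ∫ ρ in (0:ℝ)..σ, v ρ :=
      integral_mono_on hσ (intervalIntegrable_of_continuousOn_Ici
        ((hg.sub hg').abs) le_rfl hσ) hvσ fun ρ hρ => hgv ρ hρ.1
    _ ≤ ∫ ρ in (0:ℝ)..t, v ρ := by
      rw [← integral_add_adjacent_intervals hvσ
        (intervalIntegrable_of_continuousOn_Ici hv hσ (hσ.trans hσt))]
      have : 0 ≤ ∫ ρ in σ..t, v ρ := integral_nonneg hσt fun ρ hρ =>
        (abs_nonneg _).trans (hgv ρ (hσ.trans hρ.1))
      linarith

theorem abs_sum_mul_le {ι : Type*} (s : Finset ι) {c d : ι → ℝ} {D : ℝ}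
    (hc : ∀ k ∈ s, 0 ≤ c k) (hd : ∀ k ∈ s, |d k| ≤ D) :
    |∑ k ∈ s, c k * d k| ≤ (∑ k ∈ s, c k) * D := by
  rw [Finset.sum_mul]
  refine (Finset.abs_sum_le_sum_abs _ _).trans (Finset.sum_le_sum fun k hk => ?_)
  rw [abs_mul, abs_of_nonneg (hc k hk)]
  exact mul_le_mul_of_nonneg_left (hd k hk) (hc k hk)

theorem le_mul_exp_of_le_add_integral {v : ℝ → ℝ} (hv : ContinuousOn v (Ici 0)) {A B : ℝ}
    (hB : 0 ≤ B) (h : ∀ x, 0 ≤ x → v x ≤ A + B * ∫ σ in (0:ℝ)..x, v σ) {t : ℝ} (ht : 0 ≤ t) :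
    v t ≤ A * Real.exp (B * t) := by
  obtain rfl | hB := hB.eq_or_lt
  · simpa using h t ht
  set φ : ℝ → ℝ := fun x => ∫ σ in (0:ℝ)..x, v σ
  have hφ : ∀ x ∈ Ici (0:ℝ), HasDerivWithinAt φ (v x) (Ici x) x := fun x hx => by
    have hsub : Ioi x ⊆ Ici 0 := Ioi_subset_Ici_self.trans (Ici_subset_Ici.2 hx)
    exact integral_hasDerivWithinAt_right (intervalIntegrable_of_continuousOn_Ici hv le_rfl hx)
      ((hv.mono hsub).stronglyMeasurableAtFilter_nhdsWithin measurableSet_Ioi x)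
      ((hv x hx).mono hsub)
  have hφt := le_gronwallBound_of_liminf_deriv_right_le (f' := v) (δ := 0) (K := B) (ε := A)
    ((continuousOn_primitive_Ici hv).mono Icc_subset_Ici_self)
    (fun x hx _ hr => (hφ x hx.1).liminf_right_slope_le hr) (by simp)
    (fun x hx => by linarith [h x hx.1]) t ⟨ht, le_rfl⟩
  rw [sub_zero, gronwallBound_of_K_ne_0 hB.ne'] at hφt
  calc v t ≤ A + B * φ t := h t ht
    _ ≤ A + B * (0 * Real.exp (B * t) + A / B * (Real.exp (B * t) - 1)) := by gcongr
    _ = A * Real.exp (B * t) := by field_simp; ring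

theorem skorokhod_regulator_le {x w : ℝ → ℝ} {t M : ℝ} (ht : 0 ≤ t)
    (hw : ContinuousOn w (Icc 0 t)) (hw0 : w 0 ≤ M) (hx : ∀ ρ ∈ Icc 0 t, -M ≤ x ρ)
    (hcompl : ∀ a ∈ Icc 0 t, (∀ τ ∈ Ioc a t, 0 < x τ + w τ) → w t = w a) : w t ≤ M := by
  set S := Icc 0 t ∩ {ρ | w ρ ≤ M}
  have hSbdd : BddAbove S := ⟨t, fun _ hρ => hρ.1.2⟩
  have haS : sSup S ∈ S :=
    (hw.preimage_isClosed_of_isClosed isClosed_Icc isClosed_Iic).csSup_mem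
      ⟨0, ⟨le_rfl, ht⟩, hw0⟩ hSbdd
  have hpos : ∀ τ ∈ Ioc (sSup S) t, 0 < x τ + w τ := fun τ hτ => by
    have hτ₀ : τ ∈ Icc 0 t := ⟨haS.1.1.trans hτ.1.le, hτ.2⟩
    have : M < w τ := lt_of_not_ge fun h => (le_csSup hSbdd ⟨hτ₀, h⟩).not_gt hτ.1
    linarith [hx τ hτ₀]
  exact (hcompl _ haS.1 hpos).trans_le haS.2

section LimitSet

variable {ι : Type*} {l : Filter ι}

theorem isCompact_setOf_mapClusterPt {X : Type*} [TopologicalSpace X] [T2Space X] {γ : ι → X}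
    {K : Set X} (hK : IsCompact K) (hγ : ∀ᶠ t in l, γ t ∈ K) :
    IsCompact {p | MapClusterPt p l γ} :=
  hK.of_isClosed_subset isClosed_setOfPred_clusterPt fun _ hp =>
    hK.isClosed.mem_of_mapClusterPt hp hγ

theorem tendsto_infDist_setOf_mapClusterPt {X : Type*} [PseudoMetricSpace X] {γ : ι → X}
    {K : Set X} [l.NeBot] (hK : IsCompact K) (hγ : ∀ᶠ t in l, γ t ∈ K) :
    Tendsto (fun t => Metric.infDist (γ t) {p | MapClusterPt p l γ}) l (𝓝 0) := by
  obtain ⟨p, -, hp⟩ := hK.exists_mapClusterPt (tendsto_principal.2 hγ)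
  have hL := hK.tendsto_nhdsSet_of_mapClusterPt hγ fun _ _ h => h
  refine tendsto_order.2 ⟨fun a ha => Eventually.of_forall fun _ =>
    ha.trans_le Metric.infDist_nonneg, fun ε hε => ?_⟩
  filter_upwards [hL.eventually (Metric.isOpen_thickening.mem_nhdsSet.2
    (Metric.self_subset_thickening hε _))] with t ht
  exact (Metric.mem_thickening_iff_infDist_lt ⟨p, hp⟩).1 ht

end LimitSet

section MatrixPair

variable {r : ℕ}

theorem abs_sub_le_dist_fst (p q : Mat r × Mat r) (i j : Fin r) :
    |p.1 i j - q.1 i j| ≤ dist p q :=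
  calc |p.1 i j - q.1 i j| = dist (p.1 i j) (q.1 i j) := (Real.dist_eq _ _).symm
    _ ≤ dist (p.1 i) (q.1 i) := dist_le_pi_dist _ _ j
    _ ≤ dist p.1 q.1 := dist_le_pi_dist _ _ i
    _ ≤ dist p q := le_max_left _ _

theorem abs_sub_le_dist_snd (p q : Mat r × Mat r) (i j : Fin r) :
    |p.2 i j - q.2 i j| ≤ dist p q :=
  calc |p.2 i j - q.2 i j| = dist (p.2 i j) (q.2 i j) := (Real.dist_eq _ _).symm
    _ ≤ dist (p.2 i) (q.2 i) := dist_le_pi_dist _ _ j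
    _ ≤ dist p.2 q.2 := dist_le_pi_dist _ _ i
    _ ≤ dist p q := le_max_right _ _

theorem dist_le_of_abs_sub_le {p q : Mat r × Mat r} {c : ℝ} (hc : 0 ≤ c)
    (h₁ : ∀ i j, |p.1 i j - q.1 i j| ≤ c) (h₂ : ∀ i j, |p.2 i j - q.2 i j| ≤ c) :
    dist p q ≤ c := by
  simp only [Prod.dist_eq, max_le_iff, dist_pi_le_iff hc, Real.dist_eq]
  exact ⟨h₁, h₂⟩

end MatrixPair

theorem IsRouting.le_one {r : ℕ} {Q : Mat r} (hQ : IsRouting Q) (i j : Fin r) : Q i j ≤ 1 :=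
  hQ.2 i ▸ Finset.single_le_sum (fun k _ => hQ.1 i k) (Finset.mem_univ j)

namespace NetParams

variable {r : ℕ} (np : NetParams r)

theorem P_le_one (i j : Fin r) : np.P i j ≤ 1 :=
  np.P_rowsum i ▸ Finset.single_le_sum (fun k _ => np.P_nonneg i k) (Finset.mem_univ j)

theorem exists_P_pos (i : Fin r) : ∃ j, 0 < np.P i j := by
  by_contra! h
  have := np.P_rowsum i
  rw [Finset.sum_eq_zero fun j _ => le_antisymm (h j) (np.P_nonneg i j)] at this
  exact zero_ne_one this

def muSum : ℝ := ∑ i, ∑ j, np.mu i j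

theorem muSum_nonneg : 0 ≤ np.muSum :=
  Finset.sum_nonneg fun i _ => Finset.sum_nonneg fun j _ => (np.mu_pos i j).le

theorem sum_mu_le_muSum (i : Fin r) : ∑ k, np.mu k i ≤ np.muSum :=
  Finset.sum_le_sum fun k _ =>
    Finset.single_le_sum (fun l _ => (np.mu_pos k l).le) (Finset.mem_univ i)

theorem mu_le_muSum (i j : Fin r) : np.mu i j ≤ np.muSum :=
  (Finset.single_le_sum (fun k _ => (np.mu_pos k j).le) (Finset.mem_univ i)).trans
    (np.sum_mu_le_muSum j)

end NetParams

section FluidPath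

variable {r : ℕ} {np : NetParams r} {Q : Mat r} {e f e' f' : ℝ → Mat r}
  {u u' : ℝ → Fin r → ℝ}

noncomputable def netput (np : NetParams r) (Q : Mat r) (e f : ℝ → Mat r) (i : Fin r)
    (t : ℝ) : ℝ :=
  e 0 i i - np.lam i * t
    + (∑ j ∈ Finset.univ.filter (fun j => j ≠ i), np.mu j i * ∫ s in (0:ℝ)..t, e s j i)
    + Q i i * ∑ j, np.mu j i * ∫ s in (0:ℝ)..t, f s j i

/-- The time-shift invariant content of `IsFluidSol`: `u` enters only through its increments
and complementarity is stated on intervals. -/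
structure IsFluidPath (np : NetParams r) (Q : Mat r) (e f : ℝ → Mat r) (u : ℝ → Fin r → ℝ) :
    Prop where
  cont_e : ∀ i j, ContinuousOn (fun t => e t i j) (Ici 0)
  cont_f : ∀ i j, ContinuousOn (fun t => f t i j) (Ici 0)
  cont_u : ∀ i, ContinuousOn (fun t => u t i) (Ici 0)
  u_mono : ∀ i, Monotone fun t => u t i
  diag_nonneg : ∀ i t, 0 ≤ t → 0 ≤ e t i i
  eq_f : ∀ i j t, 0 ≤ t →
    f t i j = f 0 i j + np.lam i * np.P i j * (t - (u t i - u 0 i))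
      - np.mu i j * ∫ s in (0:ℝ)..t, f s i j
  eq_e_off : ∀ i j, i ≠ j → ∀ t, 0 ≤ t →
    e t i j = e 0 i j - np.mu i j * (∫ s in (0:ℝ)..t, e s i j)
      + Q i j * ∑ k, np.mu k i * ∫ s in (0:ℝ)..t, f s k i
  eq_e_diag : ∀ i t, 0 ≤ t → e t i i = netput np Q e f i t + np.lam i * (u t i - u 0 i)
  u_eq_of_forall_pos : ∀ i a b, 0 ≤ a → a ≤ b → (∀ τ ∈ Set.Ioc a b, 0 < e τ i i) → u b i = u a i

namespace IsFluidSol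

theorem continuousOn_u (hsol : IsFluidSol np Q e f u) (i : Fin r) :
    ContinuousOn (fun t => u t i) (Ici 0) := by
  obtain ⟨j, hj⟩ := np.exists_P_pos i
  have hlam := (np.lam_pos i).ne'
  have hu : EqOn (fun t => u t i) (fun t => t - (f t i j - f 0 i j
      + np.mu i j * ∫ s in (0:ℝ)..t, f s i j) / (np.lam i * np.P i j)) (Ici 0) := fun t ht => by
    dsimp only
    rw [hsol.eq_f i j t ht]
    field_simp
    ring
  refine ContinuousOn.congr ?_ hu
  refine continuousOn_id.sub (ContinuousOn.div_const ?_ _)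
  exact ((hsol.cont_f i j).sub continuousOn_const).add
    (continuousOn_const.mul (continuousOn_primitive_Ici (hsol.cont_f i j)))

theorem u_eq_of_forall_pos (hsol : IsFluidSol np Q e f u) (i : Fin r) {a b : ℝ} (ha : 0 ≤ a)
    (hab : a ≤ b) (hpos : ∀ τ ∈ Set.Ioc a b, 0 < e τ i i) : u b i = u a i := by
  have hmono := hsol.u_mono i
  have hright : ∀ x, 0 ≤ x → Function.rightLim (fun t => u t i) x = u x i := fun x hx =>
    rightLim_eq_of_tendsto ((hsol.continuousOn_u i x hx).mono_left
      (nhdsWithin_mono x fun y hy => hx.trans (le_of_lt hy)))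
  have hsub : Set.Ioc a b ⊆ Ici 0 := fun τ hτ => ha.trans hτ.1.le
  have hzero : hmono.stieltjesFunction.measure (Set.Ioc a b) = 0 := by
    have hint :
        ∫⁻ s in Set.Ioc a b, ENNReal.ofReal (e s i i) ∂hmono.stieltjesFunction.measure = 0 :=
      le_antisymm ((lintegral_mono_set hsub).trans
        (by rw [← hsol.compl i, lsMeasure, dif_pos hmono])) zero_le
    have hae := (setLIntegral_eq_zero_iff' measurableSet_Ioc
      (ENNReal.measurable_ofReal.comp_aemeasurable
        (((hsol.cont_e i i).mono hsub).aemeasurable measurableSet_Ioc))).1 hint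
    refine measure_eq_zero_iff_ae_notMem.2 ?_
    filter_upwards [hae] with τ hτ hτab
    exact (ENNReal.ofReal_pos.2 (hpos τ hτab)).ne' (hτ hτab)
  rw [StieltjesFunction.measure_Ioc, Monotone.stieltjesFunction_eq,
    Monotone.stieltjesFunction_eq, hright b (ha.trans hab), hright a ha,
    ENNReal.ofReal_eq_zero, sub_nonpos] at hzero
  exact le_antisymm hzero (hmono hab)

theorem toPath (hsol : IsFluidSol np Q e f u) : IsFluidPath np Q e f u where
  cont_e := hsol.cont_e
  cont_f := hsol.cont_f
  cont_u := hsol.continuousOn_u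
  u_mono := hsol.u_mono
  diag_nonneg i t ht := ((hsol.mem_T t ht).1 i i).1
  eq_f i j t ht := by simpa [hsol.u_zero i 0 le_rfl] using hsol.eq_f i j t ht
  eq_e_off := hsol.eq_e_off
  eq_e_diag i t ht := by
    rw [netput, hsol.u_zero i 0 le_rfl, hsol.eq_e_diag i t ht]
    ring
  u_eq_of_forall_pos i _ _ := hsol.u_eq_of_forall_pos i

end IsFluidSol

namespace IsFluidPath

theorem shift (h : IsFluidPath np Q e f u) {s : ℝ} (hs : 0 ≤ s) :
    IsFluidPath np Q (fun t => e (s + t)) (fun t => f (s + t)) (fun t => u (s + t)) := by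
  have hmaps : MapsTo (s + ·) (Ici 0) (Ici 0) := fun t ht => add_nonneg hs ht
  have hcomp {g : ℝ → ℝ} (hg : ContinuousOn g (Ici 0)) :
      ContinuousOn (fun t => g (s + t)) (Ici 0) :=
    hg.comp (continuous_const.add continuous_id).continuousOn hmaps
  have hsplit {g : ℝ → ℝ} (hg : ContinuousOn g (Ici 0)) {t : ℝ} (ht : 0 ≤ t) :=
    integral_zero_add hg hs ht
  refine ⟨fun i j => hcomp (h.cont_e i j), fun i j => hcomp (h.cont_f i j),
    fun i => hcomp (h.cont_u i), fun i a b hab => h.u_mono i (by linarith),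
    fun i t ht => h.diag_nonneg i _ (add_nonneg hs ht), fun i j t ht => ?_,
    fun i j hij t ht => ?_, fun i t ht => ?_, fun i a b ha hab hpos => ?_⟩
  · have h₁ := h.eq_f i j (s + t) (add_nonneg hs ht)
    rw [hsplit (h.cont_f i j) ht] at h₁
    simp only [add_zero]
    linear_combination h₁ - h.eq_f i j s hs
  · have h₁ := h.eq_e_off i j hij (s + t) (add_nonneg hs ht)
    simp only [hsplit (h.cont_e _ _) ht, hsplit (h.cont_f _ _) ht, mul_add,
      Finset.sum_add_distrib] at h₁
    simp only [add_zero]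
    linear_combination h₁ - h.eq_e_off i j hij s hs
  · have h₁ := h.eq_e_diag i (s + t) (add_nonneg hs ht)
    have h₂ := h.eq_e_diag i s hs
    simp only [netput, hsplit (h.cont_e _ _) ht, hsplit (h.cont_f _ _) ht, mul_add,
      Finset.sum_add_distrib] at h₁ h₂ ⊢
    simp only [add_zero]
    linear_combination h₁ - h₂
  · exact h.u_eq_of_forall_pos i (s + a) (s + b) (add_nonneg hs ha) (by linarith)
      fun τ hτ => by simpa using hpos (τ - s) ⟨by linarith [hτ.1], by linarith [hτ.2]⟩

theorem continuousOn_traj (h : IsFluidPath np Q e f u) :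
    ContinuousOn (fun t => (e t, f t)) (Ici 0) :=
  (continuousOn_pi.2 fun i => continuousOn_pi.2 (h.cont_e i)).prodMk
    (continuousOn_pi.2 fun i => continuousOn_pi.2 (h.cont_f i))

theorem continuousOn_dist (h : IsFluidPath np Q e f u) (h' : IsFluidPath np Q e' f' u') :
    ContinuousOn (fun t => dist (e t, f t) (e' t, f' t)) (Ici 0) :=
  continuous_dist.comp_continuousOn (h.continuousOn_traj.prodMk h'.continuousOn_traj)

theorem abs_integral_e_sub_le (h : IsFluidPath np Q e f u) (h' : IsFluidPath np Q e' f' u')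
    (i j : Fin r) {σ t : ℝ} (hσ : 0 ≤ σ) (hσt : σ ≤ t) :
    |(∫ ρ in (0:ℝ)..σ, e ρ i j) - ∫ ρ in (0:ℝ)..σ, e' ρ i j| ≤
      ∫ ρ in (0:ℝ)..t, dist (e ρ, f ρ) (e' ρ, f' ρ) :=
  abs_integral_sub_le_integral (h.cont_e i j) (h'.cont_e i j) (h.continuousOn_dist h')
    (fun ρ _ => abs_sub_le_dist_fst (e ρ, f ρ) (e' ρ, f' ρ) i j) hσ hσt

theorem abs_integral_f_sub_le (h : IsFluidPath np Q e f u) (h' : IsFluidPath np Q e' f' u')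
    (i j : Fin r) {σ t : ℝ} (hσ : 0 ≤ σ) (hσt : σ ≤ t) :
    |(∫ ρ in (0:ℝ)..σ, f ρ i j) - ∫ ρ in (0:ℝ)..σ, f' ρ i j| ≤
      ∫ ρ in (0:ℝ)..t, dist (e ρ, f ρ) (e' ρ, f' ρ) :=
  abs_integral_sub_le_integral (h.cont_f i j) (h'.cont_f i j) (h.continuousOn_dist h')
    (fun ρ _ => abs_sub_le_dist_snd (e ρ, f ρ) (e' ρ, f' ρ) i j) hσ hσt

theorem abs_inflow_sub_le (h : IsFluidPath np Q e f u) (h' : IsFluidPath np Q e' f' u')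
    (i : Fin r) {σ t : ℝ} (hσ : 0 ≤ σ) (hσt : σ ≤ t) :
    |∑ k, np.mu k i * ((∫ ρ in (0:ℝ)..σ, f ρ k i) - ∫ ρ in (0:ℝ)..σ, f' ρ k i)| ≤
      np.muSum * ∫ ρ in (0:ℝ)..t, dist (e ρ, f ρ) (e' ρ, f' ρ) :=
  (abs_sum_mul_le _ (fun k _ => (np.mu_pos k i).le)
    fun k _ => h.abs_integral_f_sub_le h' k i hσ hσt).trans
    (mul_le_mul_of_nonneg_right (np.sum_mu_le_muSum i)
      ((abs_nonneg _).trans (h.abs_integral_f_sub_le h' i i hσ hσt)))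

theorem abs_netput_sub_le (hQ : IsRouting Q) (h : IsFluidPath np Q e f u)
    (h' : IsFluidPath np Q e' f' u') (i : Fin r) {σ t : ℝ} (hσ : 0 ≤ σ) (hσt : σ ≤ t) :
    |netput np Q e f i σ - netput np Q e' f' i σ| ≤
      dist (e 0, f 0) (e' 0, f' 0)
        + 2 * np.muSum * ∫ ρ in (0:ℝ)..t, dist (e ρ, f ρ) (e' ρ, f' ρ) := by
  set I := ∫ ρ in (0:ℝ)..t, dist (e ρ, f ρ) (e' ρ, f' ρ)
  have hI : 0 ≤ I := (abs_nonneg _).trans (h.abs_integral_e_sub_le h' i i hσ hσt)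
  have hsplit : netput np Q e f i σ - netput np Q e' f' i σ = (e 0 i i - e' 0 i i)
      + (∑ j ∈ Finset.univ.filter (fun j => j ≠ i),
          np.mu j i * ((∫ ρ in (0:ℝ)..σ, e ρ j i) - ∫ ρ in (0:ℝ)..σ, e' ρ j i))
      + Q i i * ∑ j, np.mu j i * ((∫ ρ in (0:ℝ)..σ, f ρ j i) - ∫ ρ in (0:ℝ)..σ, f' ρ j i) := by
    simp only [netput, mul_sub, Finset.sum_sub_distrib]
    ring
  have hself : |∑ j ∈ Finset.univ.filter (fun j => j ≠ i),
      np.mu j i * ((∫ ρ in (0:ℝ)..σ, e ρ j i) - ∫ ρ in (0:ℝ)..σ, e' ρ j i)| ≤ np.muSum * I :=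
    (abs_sum_mul_le _ (fun j _ => (np.mu_pos j i).le)
      fun j _ => h.abs_integral_e_sub_le h' j i hσ hσt).trans <|
      mul_le_mul_of_nonneg_right ((Finset.sum_le_sum_of_subset_of_nonneg
        (Finset.filter_subset _ _) fun j _ _ => (np.mu_pos j i).le).trans
        (np.sum_mu_le_muSum i)) hI
  have hrouted : |Q i i * ∑ j, np.mu j i *
      ((∫ ρ in (0:ℝ)..σ, f ρ j i) - ∫ ρ in (0:ℝ)..σ, f' ρ j i)| ≤ np.muSum * I := by
    rw [abs_mul, abs_of_nonneg (hQ.1 i i)]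
    exact (mul_le_of_le_one_left (abs_nonneg _) (hQ.le_one i i)).trans
      (h.abs_inflow_sub_le h' i hσ hσt)
  rw [hsplit]
  refine (abs_add_three _ _ _).trans ?_
  linarith [abs_sub_le_dist_fst (e 0, f 0) (e' 0, f' 0) i i]

theorem regulator_le (h : IsFluidPath np Q e f u) (h' : IsFluidPath np Q e' f' u') (i : Fin r)
    {t D : ℝ} (ht : 0 ≤ t) (hD : 0 ≤ D)
    (hnetput : ∀ σ ∈ Icc 0 t, |netput np Q e f i σ - netput np Q e' f' i σ| ≤ D) :
    np.lam i * (u t i - u 0 i) ≤ np.lam i * (u' t i - u' 0 i) + D := by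
  have hlam := (np.lam_pos i).le
  have hu' : ∀ σ ∈ Icc 0 t, np.lam i * (u' σ i - u' 0 i) ≤ np.lam i * (u' t i - u' 0 i) :=
    fun σ hσ => by gcongr; exact h'.u_mono i hσ.2
  refine skorokhod_regulator_le (x := netput np Q e f i)
    (w := fun σ => np.lam i * (u σ i - u 0 i)) ht
    (continuousOn_const.mul (((h.cont_u i).mono Icc_subset_Ici_self).sub continuousOn_const))
    (by linarith [hu' 0 ⟨le_rfl, ht⟩]) (fun σ hσ => ?_) fun a ha hpos => ?_
  · linarith [(abs_le.1 (hnetput σ hσ)).1, h'.eq_e_diag i σ hσ.1, h'.diag_nonneg i σ hσ.1, hu' σ hσ]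
  · rw [h.u_eq_of_forall_pos i a t ha.1 ha.2 fun τ hτ => ?_]
    rw [h.eq_e_diag i τ (ha.1.trans hτ.1.le)]
    exact hpos τ hτ

theorem abs_regulator_sub_le (h : IsFluidPath np Q e f u) (h' : IsFluidPath np Q e' f' u')
    (i : Fin r) {t D : ℝ} (ht : 0 ≤ t) (hD : 0 ≤ D)
    (hnetput : ∀ σ ∈ Icc 0 t, |netput np Q e f i σ - netput np Q e' f' i σ| ≤ D) :
    |np.lam i * ((u t i - u 0 i) - (u' t i - u' 0 i))| ≤ D := by
  have h₁ := h.regulator_le h' i ht hD hnetput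
  have h₂ := h'.regulator_le h i ht hD fun σ hσ =>
    abs_sub_comm (netput np Q e f i σ) _ ▸ hnetput σ hσ
  exact abs_le.2 ⟨by linarith, by linarith⟩

theorem abs_f_sub_le (h : IsFluidPath np Q e f u) (h' : IsFluidPath np Q e' f' u') (i j : Fin r)
    {t D : ℝ} (ht : 0 ≤ t) (hreg : |np.lam i * ((u t i - u 0 i) - (u' t i - u' 0 i))| ≤ D) :
    |f t i j - f' t i j| ≤ dist (e 0, f 0) (e' 0, f' 0) + D
      + np.muSum * ∫ ρ in (0:ℝ)..t, dist (e ρ, f ρ) (e' ρ, f' ρ) := by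
  have hsplit : f t i j - f' t i j = (f 0 i j - f' 0 i j)
      - np.P i j * (np.lam i * ((u t i - u 0 i) - (u' t i - u' 0 i)))
      - np.mu i j * ((∫ ρ in (0:ℝ)..t, f ρ i j) - ∫ ρ in (0:ℝ)..t, f' ρ i j) := by
    rw [h.eq_f i j t ht, h'.eq_f i j t ht]
    ring
  have h₀ := abs_sub_le_dist_snd (e 0, f 0) (e' 0, f' 0) i j
  have h₁ : |np.P i j * (np.lam i * ((u t i - u 0 i) - (u' t i - u' 0 i)))| ≤ D := by
    rw [abs_mul, abs_of_nonneg (np.P_nonneg i j)]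
    exact (mul_le_of_le_one_left (abs_nonneg _) (np.P_le_one i j)).trans hreg
  have h₂ : |np.mu i j * ((∫ ρ in (0:ℝ)..t, f ρ i j) - ∫ ρ in (0:ℝ)..t, f' ρ i j)| ≤
      np.muSum * ∫ ρ in (0:ℝ)..t, dist (e ρ, f ρ) (e' ρ, f' ρ) := by
    rw [abs_mul, abs_of_pos (np.mu_pos i j)]
    exact mul_le_mul (np.mu_le_muSum i j) (h.abs_integral_f_sub_le h' i j ht le_rfl)
      (abs_nonneg _) np.muSum_nonneg
  rw [hsplit]
  exact (abs_sub _ _).trans (add_le_add ((abs_sub _ _).trans (add_le_add h₀ h₁)) h₂)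

theorem abs_e_sub_le_of_ne (hQ : IsRouting Q) (h : IsFluidPath np Q e f u)
    (h' : IsFluidPath np Q e' f' u') {i j : Fin r} (hij : i ≠ j) {t : ℝ} (ht : 0 ≤ t) :
    |e t i j - e' t i j| ≤ dist (e 0, f 0) (e' 0, f' 0)
      + 2 * np.muSum * ∫ ρ in (0:ℝ)..t, dist (e ρ, f ρ) (e' ρ, f' ρ) := by
  have hsplit : e t i j - e' t i j = (e 0 i j - e' 0 i j)
      - np.mu i j * ((∫ ρ in (0:ℝ)..t, e ρ i j) - ∫ ρ in (0:ℝ)..t, e' ρ i j)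
      + Q i j * ∑ k, np.mu k i * ((∫ ρ in (0:ℝ)..t, f ρ k i) - ∫ ρ in (0:ℝ)..t, f' ρ k i) := by
    rw [h.eq_e_off i j hij t ht, h'.eq_e_off i j hij t ht]
    simp only [mul_sub, Finset.sum_sub_distrib]
    ring
  have h₀ := abs_sub_le_dist_fst (e 0, f 0) (e' 0, f' 0) i j
  have h₁ : |np.mu i j * ((∫ ρ in (0:ℝ)..t, e ρ i j) - ∫ ρ in (0:ℝ)..t, e' ρ i j)| ≤
      np.muSum * ∫ ρ in (0:ℝ)..t, dist (e ρ, f ρ) (e' ρ, f' ρ) := by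
    rw [abs_mul, abs_of_pos (np.mu_pos i j)]
    exact mul_le_mul (np.mu_le_muSum i j) (h.abs_integral_e_sub_le h' i j ht le_rfl)
      (abs_nonneg _) np.muSum_nonneg
  have h₂ : |Q i j * ∑ k, np.mu k i * ((∫ ρ in (0:ℝ)..t, f ρ k i) - ∫ ρ in (0:ℝ)..t, f' ρ k i)|
      ≤ np.muSum * ∫ ρ in (0:ℝ)..t, dist (e ρ, f ρ) (e' ρ, f' ρ) := by
    rw [abs_mul, abs_of_nonneg (hQ.1 i j)]
    exact (mul_le_of_le_one_left (abs_nonneg _) (hQ.le_one i j)).trans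
      (h.abs_inflow_sub_le h' i ht le_rfl)
  rw [hsplit]
  exact ((abs_add_le _ _).trans (add_le_add ((abs_sub _ _).trans (add_le_add h₀ h₁)) h₂)).trans_eq
    (by ring)

theorem dist_le_add_integral (hQ : IsRouting Q) (h : IsFluidPath np Q e f u)
    (h' : IsFluidPath np Q e' f' u') {t : ℝ} (ht : 0 ≤ t) :
    dist (e t, f t) (e' t, f' t) ≤ 2 * dist (e 0, f 0) (e' 0, f' 0)
      + 4 * np.muSum * ∫ ρ in (0:ℝ)..t, dist (e ρ, f ρ) (e' ρ, f' ρ) := by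
  set d₀ := dist (e 0, f 0) (e' 0, f' 0)
  set I := ∫ ρ in (0:ℝ)..t, dist (e ρ, f ρ) (e' ρ, f' ρ)
  have hKI : 0 ≤ np.muSum * I :=
    mul_nonneg np.muSum_nonneg (integral_nonneg ht fun _ _ => dist_nonneg)
  have hD : 0 ≤ d₀ + 2 * np.muSum * I := by
    linarith [dist_nonneg (x := (e 0, f 0)) (y := (e' 0, f' 0))]
  have hnetput (i : Fin r) : ∀ σ ∈ Icc 0 t,
      |netput np Q e f i σ - netput np Q e' f' i σ| ≤ d₀ + 2 * np.muSum * I :=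
    fun σ hσ => h.abs_netput_sub_le hQ h' i hσ.1 hσ.2
  have hreg (i : Fin r) := h.abs_regulator_sub_le h' i ht hD (hnetput i)
  refine dist_le_of_abs_sub_le (by linarith) (fun i j => ?_) fun i j =>
    (h.abs_f_sub_le h' i j ht (hreg i)).trans (by linarith)
  rcases eq_or_ne i j with rfl | hij
  · have hdiag : e t i i - e' t i i = (netput np Q e f i t - netput np Q e' f' i t)
        + np.lam i * ((u t i - u 0 i) - (u' t i - u' 0 i)) := by
      rw [h.eq_e_diag i t ht, h'.eq_e_diag i t ht]
      ring
    rw [show (e t, f t).1 i i - (e' t, f' t).1 i i = e t i i - e' t i i from rfl, hdiag]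
    exact (abs_add_le _ _).trans (by linarith [hnetput i t ⟨ht, le_rfl⟩, hreg i])
  · exact (h.abs_e_sub_le_of_ne hQ h' hij ht).trans (by linarith)

theorem dist_le_mul_exp (hQ : IsRouting Q) (h : IsFluidPath np Q e f u)
    (h' : IsFluidPath np Q e' f' u') {t : ℝ} (ht : 0 ≤ t) :
    dist (e t, f t) (e' t, f' t) ≤
      2 * dist (e 0, f 0) (e' 0, f' 0) * Real.exp (4 * np.muSum * t) :=
  le_mul_exp_of_le_add_integral (h.continuousOn_dist h') (by linarith [np.muSum_nonneg])
    (fun _ hx => h.dist_le_add_integral hQ h' hx) ht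

theorem tendsto_traj_add (hQ : IsRouting Q) (h : IsFluidPath np Q e f u)
    (h' : IsFluidPath np Q e' f' u') {tn : ℕ → ℝ} (htn : ∀ᶠ n in atTop, 0 ≤ tn n)
    (hconv : Tendsto (fun n => (e (tn n), f (tn n))) atTop (𝓝 (e' 0, f' 0))) {t : ℝ}
    (ht : 0 ≤ t) :
    Tendsto (fun n => (e (tn n + t), f (tn n + t))) atTop (𝓝 (e' t, f' t)) := by
  rw [tendsto_iff_dist_tendsto_zero] at hconv ⊢
  refine squeeze_zero' (Eventually.of_forall fun _ => dist_nonneg) ?_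
    (by simpa using (hconv.const_mul 2).mul_const (Real.exp (4 * np.muSum * t)))
  filter_upwards [htn] with n hn
  simpa using (h.shift hn).dist_le_mul_exp hQ h' ht

end IsFluidPath

end FluidPath

theorem posLimitSet_eq_setOf_mapClusterPt {r : ℕ} (e f : ℝ → Mat r) :
    posLimitSet e f = {p | MapClusterPt p atTop fun t => (e t, f t)} :=
  Set.ext fun _ => ⟨fun ⟨_, htn, hconv⟩ => hconv.mapClusterPt.of_comp htn, fun hp =>
    let ⟨tn, hconv, htn⟩ := hp.exists_seq_tendsto
    ⟨tn, htn, hconv⟩⟩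

theorem MemT.dist_zero_le_one {r : ℕ} {e f : Mat r} (h : MemT e f) :
    dist (e, f) 0 ≤ 1 :=
  dist_le_of_abs_sub_le zero_le_one
    (fun i j => by simpa [abs_of_nonneg (h.1 i j).1] using (h.1 i j).2)
    (fun i j => by simpa [abs_of_nonneg (h.2.1 i j).1] using (h.2.1 i j).2)

theorem stmt_14_general {r : ℕ} (np : NetParams r)
    (Q : Mat r) (hQ : IsRouting Q)
    (e f : ℝ → Mat r) (u : ℝ → Fin r → ℝ)
    (hsol : IsFluidSol np Q e f u) :
    (posLimitSet e f).Nonempty ∧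
    IsCompact (posLimitSet e f) ∧
    (∀ (e' f' : ℝ → Mat r) (u' : ℝ → Fin r → ℝ),
      IsFluidSol np Q e' f' u' → (e' 0, f' 0) ∈ posLimitSet e f →
      ∀ t, 0 ≤ t → (e' t, f' t) ∈ posLimitSet e f) ∧
    Tendsto (fun t => Metric.infDist (e t, f t) (posLimitSet e f)) atTop (𝓝 0) := by
  have hK := isCompact_closedBall (0 : Mat r × Mat r) 1
  have hγK : ∀ᶠ t in atTop, (e t, f t) ∈ Metric.closedBall 0 1 :=
    (eventually_ge_atTop 0).mono fun t ht => (hsol.mem_T t ht).dist_zero_le_one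
  rw [posLimitSet_eq_setOf_mapClusterPt]
  refine ⟨?_, isCompact_setOf_mapClusterPt hK hγK, ?_, tendsto_infDist_setOf_mapClusterPt hK hγK⟩
  · obtain ⟨p, -, hp⟩ := hK.exists_mapClusterPt (tendsto_principal.2 hγK)
    exact ⟨p, hp⟩
  · rintro e' f' u' hsol' hp t ht
    rw [← posLimitSet_eq_setOf_mapClusterPt] at hp ⊢
    obtain ⟨tn, htn, hconv⟩ := hp
    exact ⟨fun n => tn n + t, tendsto_atTop_add_const_right _ t htn,
      hsol.toPath.tendsto_traj_add hQ hsol'.toPath (htn.eventually_ge_atTop 0) hconv ht⟩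

/-- Lemma 5: the positive limit set of a fluid trajectory is nonempty, compact
and positively invariant, and the trajectory converges to it (in the entrywise
maximum metric, which is the product/sup metric of the ambient space). -/
theorem stmt_14 {r : ℕ} (hr : 1 ≤ r) (np : NetParams r)
    (Q : Mat r) (hQ : IsRouting Q)
    (e f : ℝ → Mat r) (u : ℝ → Fin r → ℝ)
    (hsol : IsFluidSol np Q e f u) :
    (posLimitSet e f).Nonempty ∧
    IsCompact (posLimitSet e f) ∧
    (∀ (e' f' : ℝ → Mat r) (u' : ℝ → Fin r → ℝ),
      IsFluidSol np Q e' f' u' → (e' 0, f' 0) ∈ posLimitSet e f →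
      ∀ t, 0 ≤ t → (e' t, f' t) ∈ posLimitSet e f) ∧
    Tendsto (fun t => Metric.infDist (e t, f t) (posLimitSet e f)) atTop (𝓝 0) :=
  stmt_14_general np Q hQ e f u hsol
end

section
/- Assume in addition that Σ_k λ_k P_{ki} > 0 for every i. Then the feasibility region of the fleet-sizing linear program is nonempty: there exist a routing matrix q and matrices ē, f̄ ∈ ℝ_{≥0}^{r×r} satisfying λ_i P_{ij} = μ_{ij} f̄_{ij} for all i,j; μ_{ij} ē_{ij} = q_{ij} Σ_k μ_{ki} f̄_{ki} for all i ≠ j; and λ_i = Σ_{k≠i} μ_{ki} ē_{ki} + q_{ii} Σ_k μ_{ki} f̄_{ki} for all i. In particular, taking f̄_{ij} = λ_i P_{ij}/μ_{ij}, the choice q_{ij} = μ_{ji} f̄_{ji} / (Σ_k μ_{ki} f̄_{ki}) for all i,j (with ē_{ij} determined by the second set of equations) is feasible. -/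
open Finset Filter Topology MeasureTheory

/-- Feasibility for the fleet-sizing linear program. -/
def FleetFeasible {r : ℕ} (np : NetParams r) (q ebar fbar : Mat r) : Prop :=
  IsRouting q ∧
  (∀ i j, 0 ≤ ebar i j) ∧ (∀ i j, 0 ≤ fbar i j) ∧
  (∀ i j, np.lam i * np.P i j = np.mu i j * fbar i j) ∧
  (∀ i j, i ≠ j → np.mu i j * ebar i j = q i j * ∑ k, np.mu k i * fbar k i) ∧
  (∀ i, np.lam i =
    (∑ k ∈ Finset.univ.filter (fun k => k ≠ i), np.mu k i * ebar k i)
      + q i i * ∑ k, np.mu k i * fbar k i)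

/-- The full-car masses `f̄_{ij} = λ_i P_{ij}/μ_{ij}` forced by the first
constraint. -/
noncomputable def fbarLP {r : ℕ} (np : NetParams r) : Mat r :=
  fun i j => np.lam i * np.P i j / np.mu i j

/-- The explicit routing matrix `q_{ij} = μ_{ji} f̄_{ji} / Σ_k μ_{ki} f̄_{ki}`. -/
noncomputable def qLP {r : ℕ} (np : NetParams r) : Mat r :=
  fun i j => np.mu j i * fbarLP np j i / ∑ k, np.mu k i * fbarLP np k i

/-- The empty-car masses determined (off the diagonal) by the second set of
equations, with zero diagonal. -/
noncomputable def ebarLP {r : ℕ} (np : NetParams r) : Mat r :=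
  fun i j =>
    if i = j then 0
    else qLP np i j * (∑ k, np.mu k i * fbarLP np k i) / np.mu i j

/-- The feasibility region of the fleet-sizing linear program is nonempty; in
particular the explicit choice `(qLP, ebarLP, fbarLP)` is feasible. -/
theorem stmt_18 {r : ℕ} (hr : 1 ≤ r) (np : NetParams r)
    (hin : ∀ i, 0 < ∑ k, np.lam k * np.P k i) :
    (∃ q ebar fbar : Mat r, FleetFeasible np q ebar fbar) ∧
    FleetFeasible np (qLP np) (ebarLP np) (fbarLP np) := by
  suffices h : FleetFeasible np (qLP np) (ebarLP np) (fbarLP np) from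
    ⟨⟨_, _, _, h⟩, h⟩
  have hmf : ∀ k i, np.mu k i * fbarLP np k i = np.lam k * np.P k i := by
    intro k i
    rw [fbarLP]
    field_simp [(np.mu_pos k i).ne']
  have hS : ∀ i, (∑ k, np.mu k i * fbarLP np k i) = ∑ k, np.lam k * np.P k i := by
    intro i; exact Finset.sum_congr rfl fun k _ => hmf k i
  have hSpos : ∀ i, 0 < ∑ k, np.mu k i * fbarLP np k i := fun i => (hS i) ▸ hin i
  have hf0 : ∀ i j, 0 ≤ fbarLP np i j := fun i j =>
    div_nonneg (mul_nonneg (np.lam_pos i).le (np.P_nonneg i j)) (np.mu_pos i j).le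
  have hq0 : ∀ i j, 0 ≤ qLP np i j := fun i j =>
    div_nonneg (mul_nonneg (np.mu_pos j i).le (hf0 j i)) (hSpos i).le
  have hqS : ∀ i j, qLP np i j * (∑ k, np.mu k i * fbarLP np k i)
      = np.lam j * np.P j i := by
    intro i j
    rw [qLP, div_mul_cancel₀ _ (hSpos i).ne', hmf]
  refine ⟨⟨hq0, ?_⟩, ?_, hf0, fun i j => (hmf i j).symm, ?_, ?_⟩
  · intro i
    simp only [qLP]
    rw [← Finset.sum_div, hS, div_self (hin i).ne']
  · intro i j
    rw [ebarLP]
    split_ifs with h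
    · exact le_refl 0
    · exact div_nonneg (mul_nonneg (hq0 i j) (hSpos i).le) (np.mu_pos i j).le
  · intro i j hij
    rw [ebarLP, if_neg hij, mul_div_assoc', mul_comm, mul_div_assoc,
      div_self (np.mu_pos i j).ne', mul_one]
  · intro i
    have hterm : ∀ k, k ≠ i → np.mu k i * ebarLP np k i = np.lam i * np.P i k := by
      intro k hk
      rw [ebarLP, if_neg hk, mul_div_assoc', mul_comm (np.mu k i), mul_div_assoc,
        div_self (np.mu_pos k i).ne', mul_one, hqS]
    rw [Finset.sum_congr rfl (fun k hk => hterm k (Finset.mem_filter.mp hk).2), hqS]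
    have : Finset.univ.filter (fun k => k ≠ i) = Finset.univ.erase i := by
      ext k; simp [Finset.mem_erase, and_comm]
    rw [this, Finset.sum_erase_add _ _ (Finset.mem_univ i), ← Finset.mul_sum,
      np.P_rowsum, mul_one]
end

section
/- Assume in addition that Σ_k λ_k P_{ki} > 0 for every i and that the mean travel times satisfy the triangle inequality: 1/μ_{ik} ≤ 1/μ_{ij} + 1/μ_{jk} for all pairwise distinct indices i, j, k. Then the fleet-sizing linear program admits an optimal solution (q, ē, f̄) — i.e. a feasible point minimizing Σ_{i,j} f̄_{ij} + Σ_{i≠j} ē_{ij} over the feasibility region — with q_{ii} > 0 for every 1 ≤ i ≤ r. -/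
open Finset Filter Topology MeasureTheory

/-- The objective of the fleet-sizing linear program:
`Σ_{i,j} f̄_{ij} + Σ_{i≠j} ē_{ij}`. -/
noncomputable def fleetObj {r : ℕ} (ebar fbar : Mat r) : ℝ :=
  (∑ i, ∑ j, fbar i j)
    + ∑ i, ∑ j ∈ Finset.univ.filter (fun j => j ≠ i), ebar i j

/-- Repair lemma: any point of the transportation polytope can be modified,
without increasing a cost satisfying the triangle inequality (with zero
diagonal), into one with strictly positive diagonal. -/
lemma repair_aux {r : ℕ} (Lam lam : Fin r → ℝ) (c : Mat r)
    (hL : ∀ i, 0 < Lam i) (hl : ∀ i, 0 < lam i)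
    (hc0 : ∀ i, c i i = 0) (hcnn : ∀ i j, 0 ≤ c i j)
    (htri : ∀ i j k, i ≠ j → j ≠ k → i ≠ k → c i k ≤ c i j + c j k) :
    ∀ n : ℕ, ∀ x : Mat r,
      (univ.filter (fun i => x i i = 0)).card ≤ n →
      (∀ i j, 0 ≤ x i j) → (∀ i, ∑ j, x i j = Lam i) → (∀ j, ∑ i, x i j = lam j) →
      ∃ y : Mat r, (∀ i j, 0 ≤ y i j) ∧ (∀ i, ∑ j, y i j = Lam i) ∧
        (∀ j, ∑ i, y i j = lam j) ∧
        (∑ a, ∑ b, c a b * y a b) ≤ (∑ a, ∑ b, c a b * x a b) ∧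
        ∀ i, 0 < y i i := by
  intro n
  induction n with
  | zero =>
    intro x hcard hnn hrow hcol
    refine ⟨x, hnn, hrow, hcol, le_refl _, fun i => ?_⟩
    rcases lt_or_eq_of_le (hnn i i) with h | h
    · exact h
    · exfalso
      have hmem : i ∈ univ.filter (fun i => x i i = 0) := by simp [← h]
      have := Finset.card_pos.mpr ⟨i, hmem⟩
      omega
  | succ n ih =>
    intro x hcard hnn hrow hcol
    by_cases hne : (univ.filter (fun i => x i i = 0)).Nonempty
    · obtain ⟨i, hi⟩ := hne
      have hxii : x i i = 0 := (Finset.mem_filter.mp hi).2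
      have hrowpos : ∃ j, 0 < x i j := by
        by_contra h
        push_neg at h
        have h2 := Finset.sum_eq_zero (fun j (_ : j ∈ univ) =>
          le_antisymm (h j) (hnn i j))
        rw [hrow i] at h2
        exact absurd h2 (ne_of_gt (hL i))
      obtain ⟨j, hj⟩ := hrowpos
      have hji : j ≠ i := by rintro rfl; rw [hxii] at hj; exact lt_irrefl _ hj
      have hcolpos : ∃ k, 0 < x k i := by
        by_contra h
        push_neg at h
        have h2 := Finset.sum_eq_zero (fun k (_ : k ∈ univ) =>
          le_antisymm (h k) (hnn k i))
        rw [hcol i] at h2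
        exact absurd h2 (ne_of_gt (hl i))
      obtain ⟨k, hk⟩ := hcolpos
      have hki : k ≠ i := by rintro rfl; rw [hxii] at hk; exact lt_irrefl _ hk
      set δ : ℝ := min (x k i) (x i j) with hδdef
      have hδpos : 0 < δ := lt_min hk hj
      have hδ1 : δ ≤ x k i := min_le_left _ _
      have hδ2 : δ ≤ x i j := min_le_right _ _
      set x' : Mat r := fun a b => x a b +
        δ * ((if a=k then 1 else 0)*(if b=j then (1:ℝ) else 0)
          + (if a=i then 1 else 0)*(if b=i then 1 else 0)
          - (if a=k then 1 else 0)*(if b=i then 1 else 0)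
          - (if a=i then 1 else 0)*(if b=j then 1 else 0)) with hx'
      have hrow' : ∀ a, ∑ b, x' a b = Lam a := by
        intro a
        rw [← hrow a]
        simp only [hx']
        simp [Finset.sum_add_distrib, Finset.sum_sub_distrib, ← Finset.mul_sum,
          Finset.sum_ite_eq']
      have hcol' : ∀ b, ∑ a, x' a b = lam b := by
        intro b
        rw [← hcol b]
        simp only [hx']
        simp [Finset.sum_add_distrib, Finset.sum_sub_distrib, ← Finset.mul_sum,
          Finset.sum_ite_eq', mul_add, mul_sub, ite_mul, mul_ite, mul_comm]
      have hnn' : ∀ a b, 0 ≤ x' a b := by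
        intro a b
        have hab := hnn a b
        simp only [hx']
        split_ifs <;> subst_vars <;>
          first
            | exact absurd rfl hki
            | exact absurd rfl hji
            | linarith [hab, hδ1, hδ2, hδpos.le]
      have hcost : (∑ a, ∑ b, c a b * x' a b) =
          (∑ a, ∑ b, c a b * x a b) + δ * (c k j + c i i - c k i - c i j) := by
        simp only [hx', mul_add, Finset.sum_add_distrib]
        congr 1
        simp [Finset.sum_add_distrib, Finset.sum_sub_distrib, ← Finset.mul_sum,
          Finset.sum_ite_eq', mul_add, mul_sub, ite_mul, mul_ite, mul_comm]
        ring
      have htriineq : c k j + c i i - c k i - c i j ≤ 0 := by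
        rw [hc0 i]
        by_cases hkj : k = j
        · rw [hkj, hc0 j]
          linarith [hcnn j i, hcnn i j]
        · have := htri k i j hki (fun h => hji h.symm) hkj
          linarith
      have hcost_le : (∑ a, ∑ b, c a b * x' a b) ≤ (∑ a, ∑ b, c a b * x a b) := by
        rw [hcost]
        nlinarith
      have hx'ii : x' i i = δ := by
        simp [hx', Ne.symm hki, Ne.symm hji, hxii]
      have hsub : (univ.filter (fun l => x' l l = 0)) ⊆
          (univ.filter (fun l => x l l = 0)).erase i := by
        intro l hl2
        have hx'll : x' l l = 0 := (Finset.mem_filter.mp hl2).2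
        have hlne : l ≠ i := by
          rintro rfl
          rw [hx'ii] at hx'll
          exact absurd hx'll (ne_of_gt hδpos)
        rw [Finset.mem_erase]
        refine ⟨hlne, Finset.mem_filter.mpr ⟨Finset.mem_univ _, ?_⟩⟩
        have hge : x l l ≤ x' l l := by
          have hab := hnn l l
          simp only [hx']
          split_ifs <;> subst_vars <;>
            first
              | exact absurd rfl hki
              | exact absurd rfl hji
              | exact absurd rfl hlne
              | linarith [hab, hδ1, hδ2, hδpos.le]
        have := hnn l l
        linarith [hge, hx'll.le, hx'll.ge]
      have hcard' : (univ.filter (fun l => x' l l = 0)).card ≤ n := by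
        have h1 := Finset.card_le_card hsub
        have h2 : ((univ.filter (fun l => x l l = 0)).erase i).card
            = (univ.filter (fun l => x l l = 0)).card - 1 :=
          Finset.card_erase_of_mem hi
        omega
      obtain ⟨y, hy1, hy2, hy3, hy4, hy5⟩ := ih x' hcard' hnn' hrow' hcol'
      exact ⟨y, hy1, hy2, hy3, le_trans hy4 hcost_le, hy5⟩
    · refine ⟨x, hnn, hrow, hcol, le_refl _, fun i => ?_⟩
      rcases lt_or_eq_of_le (hnn i i) with h | h
      · exact h
      · exact absurd ⟨i, by simp [← h]⟩ hne

/-- If the mean travel times satisfy the triangle inequality, the fleet-sizing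
linear program admits an optimal solution whose routing matrix has strictly
positive diagonal. -/
theorem stmt_19 {r : ℕ} (hr : 1 ≤ r) (np : NetParams r)
    (hin : ∀ i, 0 < ∑ k, np.lam k * np.P k i)
    (htri : ∀ i j k, i ≠ j → j ≠ k → i ≠ k →
      1 / np.mu i k ≤ 1 / np.mu i j + 1 / np.mu j k) :
    ∃ q ebar fbar : Mat r, FleetFeasible np q ebar fbar ∧
      (∀ q' ebar' fbar' : Mat r, FleetFeasible np q' ebar' fbar' →
        fleetObj ebar fbar ≤ fleetObj ebar' fbar') ∧
      ∀ i, 0 < q i i := by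
  classical
  haveI : NeZero r := ⟨by omega⟩
  obtain ⟨lam, mu, P, lam_pos, mu_pos, P_nonneg, P_rowsum⟩ := np
  simp only [FleetFeasible, fleetObj, IsRouting] at *
  set Λ : Fin r → ℝ := fun i => ∑ k, lam k * P k i with hΛdef
  have hΛ : ∀ i, 0 < Λ i := hin
  set c : Mat r := fun a b => if a = b then 0 else 1 / mu a b with hcdef
  set G : Mat r → ℝ := fun x => ∑ a, ∑ b, c a b * x a b with hGdef
  set S : Set (Mat r) := {x | (∀ i j, 0 ≤ x i j) ∧ (∀ i, ∑ j, x i j = Λ i) ∧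
    (∀ j, ∑ i, x i j = lam j)} with hSdef
  set L : ℝ := ∑ k, lam k with hLdef
  have hLpos : 0 < L := Finset.sum_pos (fun k _ => lam_pos k) Finset.univ_nonempty
  have hΛsum : ∑ a, Λ a = L := by
    rw [hΛdef, Finset.sum_comm]
    simp only [← Finset.mul_sum, P_rowsum, mul_one, hLdef]
  have hSne : S.Nonempty := by
    refine ⟨fun a b => Λ a * lam b / L,
      fun a b => div_nonneg (mul_nonneg (hΛ a).le (lam_pos b).le) hLpos.le,
      fun a => ?_, fun b => ?_⟩
    · rw [← Finset.sum_div, ← Finset.mul_sum, ← hLdef, mul_div_assoc,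
        div_self (ne_of_gt hLpos), mul_one]
    · rw [← Finset.sum_div, ← Finset.sum_mul, hΛsum, mul_comm,
        mul_div_assoc, div_self (ne_of_gt hLpos), mul_one]
  have hcont_ab : ∀ a b, Continuous (fun x : Mat r => x a b) :=
    fun a b => (continuous_apply b).comp (continuous_apply a)
  have hGcont : Continuous G :=
    continuous_finset_sum _ fun a _ => continuous_finset_sum _ fun b _ =>
      continuous_const.mul (hcont_ab a b)
  have hSclosed : IsClosed S := by
    have hrw : S = (⋂ i, ⋂ j, {x : Mat r | 0 ≤ x i j}) ∩
        ((⋂ i, {x : Mat r | ∑ j, x i j = Λ i}) ∩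
         (⋂ j, {x : Mat r | ∑ i, x i j = lam j})) := by
      ext x
      simp only [hSdef, Set.mem_setOf_eq, Set.mem_inter_iff, Set.mem_iInter]
    rw [hrw]
    refine IsClosed.inter (isClosed_iInter fun i => isClosed_iInter fun j =>
      isClosed_le continuous_const (hcont_ab i j)) (IsClosed.inter ?_ ?_)
    · exact isClosed_iInter fun i => isClosed_eq
        (continuous_finset_sum _ fun j _ => hcont_ab i j) continuous_const
    · exact isClosed_iInter fun j => isClosed_eq
        (continuous_finset_sum _ fun i _ => hcont_ab i j) continuous_const
  have hSsub : S ⊆ Set.Icc (fun _ _ => (0:ℝ)) (fun _ _ => L) := by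
    rintro x ⟨hnn, hrow, _⟩
    constructor
    · intro a; intro b; exact hnn a b
    · intro a; intro b
      calc x a b ≤ ∑ j, x a j :=
            Finset.single_le_sum (fun j _ => hnn a j) (Finset.mem_univ b)
        _ = Λ a := hrow a
        _ ≤ ∑ a', Λ a' :=
            Finset.single_le_sum (fun a' _ => (hΛ a').le) (Finset.mem_univ a)
        _ = L := hΛsum
  have hScompact : IsCompact S :=
    IsCompact.of_isClosed_subset isCompact_Icc hSclosed hSsub
  obtain ⟨xmin, hxminS, hmin⟩ := hScompact.exists_isMinOn hSne hGcont.continuousOn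
  obtain ⟨hxnn, hxrow, hxcol⟩ := hxminS
  have hc0 : ∀ i, c i i = 0 := fun i => by simp [hcdef]
  have hcnn : ∀ i j, 0 ≤ c i j := by
    intro i j
    rw [hcdef]
    dsimp only
    split_ifs
    · exact le_rfl
    · exact (one_div_pos.mpr (mu_pos i j)).le
  have htri' : ∀ i j k, i ≠ j → j ≠ k → i ≠ k → c i k ≤ c i j + c j k := by
    intro i j k hij hjk hik
    rw [hcdef]
    dsimp only
    rw [if_neg hik, if_neg hij, if_neg hjk]
    exact htri i j k hij hjk hik
  obtain ⟨y, hy1, hy2, hy3, hy4, hy5⟩ :=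
    repair_aux Λ lam c hΛ lam_pos hc0 hcnn htri'
      (univ.filter (fun i => xmin i i = 0)).card xmin le_rfl hxnn hxrow hxcol
  -- the candidate solution
  refine ⟨fun a b => y a b / Λ a,
    fun a b => if a = b then 0 else y a b / mu a b,
    fun a b => lam a * P a b / mu a b,
    ⟨⟨fun a b => div_nonneg (hy1 a b) (hΛ a).le,
      fun a => by rw [← Finset.sum_div, hy2 a, div_self (hΛ a).ne']⟩,
     ?_, ?_, ?_, ?_, ?_⟩, ?_, fun i => div_pos (hy5 i) (hΛ i)⟩
  · intro a b
    dsimp only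
    split_ifs
    · exact le_rfl
    · exact div_nonneg (hy1 a b) (mu_pos a b).le
  · intro a b
    exact div_nonneg (mul_nonneg (lam_pos a).le (P_nonneg a b)) (mu_pos a b).le
  · intro a b
    dsimp only
    rw [mul_comm (mu a b)]
    exact (div_mul_cancel₀ _ (ne_of_gt (mu_pos a b))).symm
  · intro a b hab
    have hMf : ∑ k, mu k a * (lam k * P k a / mu k a) = Λ a := by
      rw [hΛdef]
      exact Finset.sum_congr rfl fun k _ => by
        rw [mul_comm]; exact div_mul_cancel₀ _ (ne_of_gt (mu_pos k a))
    dsimp only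
    rw [hMf, if_neg hab, mul_comm, div_mul_cancel₀ _ (ne_of_gt (mu_pos a b)),
      div_mul_cancel₀ _ (ne_of_gt (hΛ a))]
  · intro i
    have hMf : ∑ k, mu k i * (lam k * P k i / mu k i) = Λ i := by
      rw [hΛdef]
      exact Finset.sum_congr rfl fun k _ => by
        rw [mul_comm]; exact div_mul_cancel₀ _ (ne_of_gt (mu_pos k i))
    dsimp only
    rw [hMf]
    have hfilter : univ.filter (fun k => k ≠ i) = univ.erase i := by
      ext a; simp [Finset.mem_erase, and_comm]
    rw [hfilter]
    have hsum1 : ∑ k ∈ univ.erase i, mu k i * (if k = i then 0 else y k i / mu k i)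
        = ∑ k ∈ univ.erase i, y k i :=
      Finset.sum_congr rfl fun k hk => by
        rw [if_neg (Finset.mem_erase.mp hk).1, mul_comm,
          div_mul_cancel₀ _ (ne_of_gt (mu_pos k i))]
    rw [hsum1, div_mul_cancel₀ _ (ne_of_gt (hΛ i)),
      Finset.sum_erase_add univ _ (Finset.mem_univ i)]
    exact (hy3 i).symm
  · -- optimality
    rintro q' e' f' ⟨⟨hq'nn, hq'row⟩, he'nn, hf'nn, hf'eq, he'eq, hbal'⟩
    have hMf' : ∀ t, ∑ k, mu k t * f' k t = Λ t := by
      intro t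
      rw [hΛdef]
      exact Finset.sum_congr rfl fun k _ => (hf'eq k t).symm
    have hf'val : ∀ a b, f' a b = lam a * P a b / mu a b := by
      intro a b
      rw [eq_div_iff (ne_of_gt (mu_pos a b))]
      linear_combination -hf'eq a b
    set x' : Mat r := fun a b => Λ a * q' a b with hx'def
    have hx'S : x' ∈ S := by
      refine ⟨fun a b => mul_nonneg (hΛ a).le (hq'nn a b), fun a => ?_, fun b => ?_⟩
      · rw [hx'def]
        dsimp only
        rw [← Finset.mul_sum, hq'row a, mul_one]
      · have hb := hbal' b
        rw [hMf' b] at hb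
        have hfilter : univ.filter (fun k => k ≠ b) = univ.erase b := by
          ext a; simp [Finset.mem_erase, and_comm]
        rw [hfilter] at hb
        have hsum1 : ∑ k ∈ univ.erase b, mu k b * e' k b
            = ∑ k ∈ univ.erase b, Λ k * q' k b :=
          Finset.sum_congr rfl fun k hk => by
            have h := he'eq k b (Finset.mem_erase.mp hk).1
            rw [hMf' k] at h
            rw [h]; ring
        rw [hsum1] at hb
        rw [hx'def]
        dsimp only
        rw [← Finset.sum_erase_add univ _ (Finset.mem_univ b), hb]
        ring
    have he'val : ∀ a b, a ≠ b → e' a b = c a b * x' a b := by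
      intro a b hab
      have h := he'eq a b hab
      rw [hMf' a] at h
      rw [hcdef, hx'def]
      dsimp only
      rw [if_neg hab, one_div, inv_mul_eq_div, eq_div_iff (ne_of_gt (mu_pos a b))]
      linear_combination h
    have hobj2 : ∀ a, ∑ b ∈ univ.filter (fun b => b ≠ a), e' a b
        = ∑ b, c a b * x' a b := by
      intro a
      rw [Finset.sum_filter]
      refine Finset.sum_congr rfl fun b _ => ?_
      by_cases hba : b = a
      · subst hba
        rw [if_neg (by simp), hc0 b, zero_mul]
      · rw [if_pos hba, he'val a b (Ne.symm hba)]
    have hobj2' : ∀ a, ∑ b ∈ univ.filter (fun b => b ≠ a),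
        (if a = b then (0:ℝ) else y a b / mu a b) = ∑ b, c a b * y a b := by
      intro a
      rw [Finset.sum_filter]
      refine Finset.sum_congr rfl fun b _ => ?_
      by_cases hba : b = a
      · subst hba
        rw [if_neg (by simp), hc0 b, zero_mul]
      · rw [if_pos hba, if_neg (Ne.symm hba), hcdef]
        dsimp only
        rw [if_neg (Ne.symm hba), one_div, inv_mul_eq_div]
    have hGle : G y ≤ G x' := by
      have h1 : G y ≤ G xmin := hy4
      have h2 : G xmin ≤ G x' := hmin hx'S
      linarith
    have hfsum : ∑ a, ∑ b, f' a b = ∑ a, ∑ b, lam a * P a b / mu a b :=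
      Finset.sum_congr rfl fun a _ => Finset.sum_congr rfl fun b _ => hf'val a b
    have hGy : G y = ∑ a, ∑ b, c a b * y a b := rfl
    have hGx' : G x' = ∑ a, ∑ b, c a b * x' a b := rfl
    calc (∑ a, ∑ b, lam a * P a b / mu a b)
          + ∑ a, ∑ b ∈ univ.filter (fun b => b ≠ a),
              (if a = b then (0:ℝ) else y a b / mu a b)
        = (∑ a, ∑ b, lam a * P a b / mu a b) + G y := by
          rw [hGy]
          congr 1
          exact Finset.sum_congr rfl fun a _ => hobj2' a
      _ ≤ (∑ a, ∑ b, lam a * P a b / mu a b) + G x' := by linarith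
      _ = (∑ a, ∑ b, f' a b)
          + ∑ a, ∑ b ∈ univ.filter (fun b => b ≠ a), e' a b := by
          rw [hfsum, hGx']
          congr 1
          exact (Finset.sum_congr rfl fun a _ => (hobj2 a).symm)
end
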